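/- arXiv:0812.1447 — 5 statements merged into one kernel-verified Lean document; each statement's English description precedes it below -/
import Mathlib

section
/- The a-Massey product is well defined: let (A,d) be a DGA and a, b_1, b_2, b_3 ∈ H^2(A) with a·b_i = 0 for i = 1,2,3. Choose representatives a = [α], b_i = [β_i] and ξ_i with dξ_i = α·β_i. Then ξ_1·ξ_2·β_3 + ξ_2·ξ_3·β_1 + ξ_3·ξ_1·β_2 is closed, and its class in H^8(A) modulo ⟨b_1,a,b_2⟩·H^3(A) + ⟨b_1,a,b_3⟩·H^3(A) + ⟨b_2,a,b_3⟩·H^3(A) is independent of the choices. -/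
/-- Axioms of a graded-commutative differential graded algebra over `ℝ`. -/
structure DGAAxioms {A : Type*} [Ring A] [Algebra ℝ A]
    (𝒜 : ℕ → Submodule ℝ A) (d : A →ₗ[ℝ] A) : Prop where
  one_mem : (1 : A) ∈ 𝒜 0
  mul_mem : ∀ {i j : ℕ} {a b : A}, a ∈ 𝒜 i → b ∈ 𝒜 j → a * b ∈ 𝒜 (i + j)
  gcomm : ∀ {i j : ℕ} {a b : A}, a ∈ 𝒜 i → b ∈ 𝒜 j →
    a * b = ((-1 : ℝ) ^ (i * j)) • (b * a)
  d_mem : ∀ {i : ℕ} {a : A}, a ∈ 𝒜 i → d a ∈ 𝒜 (i + 1)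
  d_d : ∀ a : A, d (d a) = 0
  leibniz : ∀ {i : ℕ} {a : A}, a ∈ 𝒜 i → ∀ b : A,
    d (a * b) = d a * b + ((-1 : ℝ) ^ i) • (a * d b)


section MasseyHelpers

variable {A : Type*} [Ring A] [Algebra ℝ A] {𝒜 : ℕ → Submodule ℝ A} {d : A →ₗ[ℝ] A}

lemma DGAAxioms.comm (h : DGAAxioms 𝒜 d) {i j : ℕ} {x y : A} (hx : x ∈ 𝒜 i) (hy : y ∈ 𝒜 j)
    (hij : Even (i*j)) : x * y = y * x := by
  rw [h.gcomm hx hy, hij.neg_one_pow, one_smul]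

lemma DGAAxioms.acomm (h : DGAAxioms 𝒜 d) {i j : ℕ} {x y : A} (hx : x ∈ 𝒜 i) (hy : y ∈ 𝒜 j)
    (hij : Odd (i*j)) : x * y = -(y * x) := by
  rw [h.gcomm hx hy, hij.neg_one_pow, neg_one_smul]

lemma DGAAxioms.dmul_even (h : DGAAxioms 𝒜 d) {i : ℕ} {x : A} (hx : x ∈ 𝒜 i) (hi : Even i)
    (y : A) : d (x * y) = d x * y + x * d y := by
  rw [h.leibniz hx y, hi.neg_one_pow, one_smul]

lemma DGAAxioms.dmul_odd (h : DGAAxioms 𝒜 d) {i : ℕ} {x : A} (hx : x ∈ 𝒜 i) (hi : Odd i)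
    (y : A) : d (x * y) = d x * y - x * d y := by
  rw [h.leibniz hx y, hi.neg_one_pow, neg_one_smul, sub_eq_add_neg]

lemma DGAAxioms.odd_sq (h : DGAAxioms 𝒜 d) {i : ℕ} {x : A} (hx : x ∈ 𝒜 i)
    (hi : Odd (i*i)) : x * x = 0 := by
  have h1 : x * x = -(x * x) := h.acomm hx hx hi
  have h2 : (2:ℝ) • (x * x) = 0 := by
    rw [two_smul]
    rw [eq_neg_iff_add_eq_zero] at h1
    exact h1
  have h3 := congrArg (fun z => (2:ℝ)⁻¹ • z) h2
  simpa [smul_smul] using h3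

lemma massey_half_cancel {x y : A} (h : x + x = y + y) : x = y := by
  have h2 : (2:ℝ) • x = (2:ℝ) • y := by rw [two_smul, two_smul]; exact h
  have h3 := congrArg (fun z => (2:ℝ)⁻¹ • z) h2
  simpa [smul_smul] using h3

end MasseyHelpers

/-- The a-Massey product is well defined.  Let `α, β₁, β₂, β₃ ∈ A²` be closed
with `[α]·[βᵢ] = 0`, witnessed by primitives `ξᵢ ∈ A³` with `d ξᵢ = α βᵢ`.  Then
`ξ₁ ξ₂ β₃ + ξ₂ ξ₃ β₁ + ξ₃ ξ₁ β₂ ∈ A⁸` is closed, and for any other choice of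
closed cohomologous representatives `α'`, `βᵢ'` and primitives `ξᵢ'`, the two
representatives differ by an exact element plus an element of
`⟨b₁,a,b₂⟩·H³ + ⟨b₁,a,b₃⟩·H³ + ⟨b₂,a,b₃⟩·H³`, where the representative
`βᵢ ζⱼ − ζᵢ βⱼ` (built from primitives `ζᵢ` with `d ζᵢ = α βᵢ`) represents the
triple Massey product `⟨bᵢ,a,bⱼ⟩ ∈ H⁵(A)`, multiplied by a closed element of
degree `3`. -/
theorem a_massey_product_well_defined
    {A : Type*} [Ring A] [Algebra ℝ A]
    (𝒜 : ℕ → Submodule ℝ A) [DirectSum.Decomposition 𝒜]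
    (d : A →ₗ[ℝ] A) (hDGA : DGAAxioms 𝒜 d)
    (α β₁ β₂ β₃ ξ₁ ξ₂ ξ₃ : A)
    (hα : α ∈ 𝒜 2) (hβ₁ : β₁ ∈ 𝒜 2) (hβ₂ : β₂ ∈ 𝒜 2) (hβ₃ : β₃ ∈ 𝒜 2)
    (hdα : d α = 0) (hdβ₁ : d β₁ = 0) (hdβ₂ : d β₂ = 0) (hdβ₃ : d β₃ = 0)
    (hξ₁ : ξ₁ ∈ 𝒜 3) (hξ₂ : ξ₂ ∈ 𝒜 3) (hξ₃ : ξ₃ ∈ 𝒜 3)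
    (hdξ₁ : d ξ₁ = α * β₁) (hdξ₂ : d ξ₂ = α * β₂) (hdξ₃ : d ξ₃ = α * β₃) :
    d (ξ₁ * ξ₂ * β₃ + ξ₂ * ξ₃ * β₁ + ξ₃ * ξ₁ * β₂) = 0 ∧
    ∀ α' β₁' β₂' β₃' ξ₁' ξ₂' ξ₃' : A,
      α' ∈ 𝒜 2 → β₁' ∈ 𝒜 2 → β₂' ∈ 𝒜 2 → β₃' ∈ 𝒜 2 →
      d α' = 0 → d β₁' = 0 → d β₂' = 0 → d β₃' = 0 →
      (∃ τ ∈ 𝒜 1, d τ = α' - α) →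
      (∃ τ ∈ 𝒜 1, d τ = β₁' - β₁) →
      (∃ τ ∈ 𝒜 1, d τ = β₂' - β₂) →
      (∃ τ ∈ 𝒜 1, d τ = β₃' - β₃) →
      ξ₁' ∈ 𝒜 3 → ξ₂' ∈ 𝒜 3 → ξ₃' ∈ 𝒜 3 →
      d ξ₁' = α' * β₁' → d ξ₂' = α' * β₂' → d ξ₃' = α' * β₃' →
      ∃ ζ₁ ∈ 𝒜 3, d ζ₁ = α * β₁ ∧
      ∃ ζ₂ ∈ 𝒜 3, d ζ₂ = α * β₂ ∧
      ∃ ζ₃ ∈ 𝒜 3, d ζ₃ = α * β₃ ∧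
      ∃ c₁₂ ∈ 𝒜 3, d c₁₂ = 0 ∧
      ∃ c₁₃ ∈ 𝒜 3, d c₁₃ = 0 ∧
      ∃ c₂₃ ∈ 𝒜 3, d c₂₃ = 0 ∧
      ∃ η ∈ 𝒜 7,
        (ξ₁' * ξ₂' * β₃' + ξ₂' * ξ₃' * β₁' + ξ₃' * ξ₁' * β₂') -
            (ξ₁ * ξ₂ * β₃ + ξ₂ * ξ₃ * β₁ + ξ₃ * ξ₁ * β₂) =
          (β₁ * ζ₂ - ζ₁ * β₂) * c₁₂ + (β₁ * ζ₃ - ζ₁ * β₃) * c₁₃ +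
            (β₂ * ζ₃ - ζ₂ * β₃) * c₂₃ + d η := by
  constructor
  · -- closedness
    have f1 : d (ξ₁ * ξ₂ * β₃) = (α*β₁*ξ₂ - ξ₁*(α*β₂))*β₃ := by
      have e : d (ξ₁*ξ₂) = α*β₁*ξ₂ - ξ₁*(α*β₂) := by
        rw [hDGA.dmul_odd hξ₁ ⟨1, rfl⟩, hdξ₁, hdξ₂]
      rw [hDGA.dmul_even (hDGA.mul_mem hξ₁ hξ₂) ⟨3, rfl⟩, e, hdβ₃, mul_zero, add_zero]
    have f2 : d (ξ₂ * ξ₃ * β₁) = (α*β₂*ξ₃ - ξ₂*(α*β₃))*β₁ := by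
      have e : d (ξ₂*ξ₃) = α*β₂*ξ₃ - ξ₂*(α*β₃) := by
        rw [hDGA.dmul_odd hξ₂ ⟨1, rfl⟩, hdξ₂, hdξ₃]
      rw [hDGA.dmul_even (hDGA.mul_mem hξ₂ hξ₃) ⟨3, rfl⟩, e, hdβ₁, mul_zero, add_zero]
    have f3 : d (ξ₃ * ξ₁ * β₂) = (α*β₃*ξ₁ - ξ₃*(α*β₁))*β₂ := by
      have e : d (ξ₃*ξ₁) = α*β₃*ξ₁ - ξ₃*(α*β₁) := by
        rw [hDGA.dmul_odd hξ₃ ⟨1, rfl⟩, hdξ₃, hdξ₁]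
      rw [hDGA.dmul_even (hDGA.mul_mem hξ₃ hξ₁) ⟨3, rfl⟩, e, hdβ₂, mul_zero, add_zero]
    rw [map_add, map_add, f1, f2, f3]
    linear_combination (norm := noncomm_ring)
      - (hDGA.comm hξ₃ hα ⟨3, rfl⟩) * β₁ * β₂ -
      α * (hDGA.comm hξ₃ hβ₁ ⟨3, rfl⟩) * β₂ -
      α * β₁ * (hDGA.comm hξ₃ hβ₂ ⟨3, rfl⟩) +
      α * β₃ * (hDGA.comm hξ₁ hβ₂ ⟨3, rfl⟩) +
      α * (hDGA.comm hβ₃ hβ₂ ⟨2, rfl⟩) * ξ₁ -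
      (hDGA.comm hξ₂ hα ⟨3, rfl⟩) * β₃ * β₁ -
      α * (hDGA.comm hξ₂ hβ₃ ⟨3, rfl⟩) * β₁ -
      α * β₃ * (hDGA.comm hξ₂ hβ₁ ⟨3, rfl⟩) -
      α * (hDGA.comm hβ₃ hβ₁ ⟨2, rfl⟩) * ξ₂ +
      α * β₂ * (hDGA.comm hξ₃ hβ₁ ⟨3, rfl⟩) +
      α * (hDGA.comm hβ₂ hβ₁ ⟨2, rfl⟩) * ξ₃ -
      (hDGA.comm hξ₁ hα ⟨3, rfl⟩) * β₂ * β₃ -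
      α * (hDGA.comm hξ₁ hβ₂ ⟨3, rfl⟩) * β₃ -
      α * β₂ * (hDGA.comm hξ₁ hβ₃ ⟨3, rfl⟩) +
      α * β₁ * (hDGA.comm hξ₂ hβ₃ ⟨3, rfl⟩)
  · intro α' β₁' β₂' β₃' ξ₁' ξ₂' ξ₃' hα' hβ₁' hβ₂' hβ₃' hdα' hdβ₁' hdβ₂' hdβ₃'
      hex0 hex1 hex2 hex3 hξ₁' hξ₂' hξ₃' hdξ₁' hdξ₂' hdξ₃'
    obtain ⟨τ₀, mτ₀, hdτ₀⟩ := hex0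
    obtain ⟨τ₁, mτ₁, hdτ₁⟩ := hex1
    obtain ⟨τ₂, mτ₂, hdτ₂⟩ := hex2
    obtain ⟨τ₃, mτ₃, hdτ₃⟩ := hex3
    -- the closed corrections cᵢ
    set c₁ : A := ξ₁' - τ₀*β₁' - α*τ₁ - ξ₁ with hc₁def
    set c₂ : A := ξ₂' - τ₀*β₂' - α*τ₂ - ξ₂ with hc₂def
    set c₃ : A := ξ₃' - τ₀*β₃' - α*τ₃ - ξ₃ with hc₃def
    have mc₁ : c₁ ∈ 𝒜 3 := by
      rw [hc₁def]
      exact sub_mem (sub_mem (sub_mem hξ₁' (hDGA.mul_mem mτ₀ hβ₁')) (hDGA.mul_mem hα mτ₁)) hξ₁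
    have mc₂ : c₂ ∈ 𝒜 3 := by
      rw [hc₂def]
      exact sub_mem (sub_mem (sub_mem hξ₂' (hDGA.mul_mem mτ₀ hβ₂')) (hDGA.mul_mem hα mτ₂)) hξ₂
    have mc₃ : c₃ ∈ 𝒜 3 := by
      rw [hc₃def]
      exact sub_mem (sub_mem (sub_mem hξ₃' (hDGA.mul_mem mτ₀ hβ₃')) (hDGA.mul_mem hα mτ₃)) hξ₃
    have hdc₁ : d c₁ = 0 := by
      rw [hc₁def, map_sub, map_sub, map_sub, hDGA.dmul_odd mτ₀ ⟨0, rfl⟩,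
        hDGA.dmul_even hα ⟨1, rfl⟩, hdτ₀, hdτ₁, hdβ₁', hdα, hdξ₁', hdξ₁]
      noncomm_ring
    have hdc₂ : d c₂ = 0 := by
      rw [hc₂def, map_sub, map_sub, map_sub, hDGA.dmul_odd mτ₀ ⟨0, rfl⟩,
        hDGA.dmul_even hα ⟨1, rfl⟩, hdτ₀, hdτ₂, hdβ₂', hdα, hdξ₂', hdξ₂]
      noncomm_ring
    have hdc₃ : d c₃ = 0 := by
      rw [hc₃def, map_sub, map_sub, map_sub, hDGA.dmul_odd mτ₀ ⟨0, rfl⟩,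
        hDGA.dmul_even hα ⟨1, rfl⟩, hdτ₀, hdτ₃, hdβ₃', hdα, hdξ₃', hdξ₃]
      noncomm_ring
    -- the primitives ζᵢ used in the Massey-product representatives
    set ζ₁ : A := ξ₁ + (1/2 : ℝ) • c₁ with hζ₁def
    set ζ₂ : A := ξ₂ + (1/2 : ℝ) • c₂ with hζ₂def
    set ζ₃ : A := ξ₃ + (1/2 : ℝ) • c₃ with hζ₃def
    have mζ₁ : ζ₁ ∈ 𝒜 3 := by rw [hζ₁def]; exact add_mem hξ₁ (Submodule.smul_mem _ _ mc₁)
    have mζ₂ : ζ₂ ∈ 𝒜 3 := by rw [hζ₂def]; exact add_mem hξ₂ (Submodule.smul_mem _ _ mc₂)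
    have mζ₃ : ζ₃ ∈ 𝒜 3 := by rw [hζ₃def]; exact add_mem hξ₃ (Submodule.smul_mem _ _ mc₃)
    have hdζ₁ : d ζ₁ = α * β₁ := by
      rw [hζ₁def, map_add, map_smul, hdc₁, smul_zero, add_zero, hdξ₁]
    have hdζ₂ : d ζ₂ = α * β₂ := by
      rw [hζ₂def, map_add, map_smul, hdc₂, smul_zero, add_zero, hdξ₂]
    have hdζ₃ : d ζ₃ = α * β₃ := by
      rw [hζ₃def, map_add, map_smul, hdc₃, smul_zero, add_zero, hdξ₃]
    have hζζ₁ : ζ₁ + ζ₁ = ξ₁ + ξ₁ + c₁ := by rw [hζ₁def]; module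
    have hζζ₂ : ζ₂ + ζ₂ = ξ₂ + ξ₂ + c₂ := by rw [hζ₂def]; module
    have hζζ₃ : ζ₃ + ζ₃ = ξ₃ + ξ₃ + c₃ := by rw [hζ₃def]; module
    -- intermediate primitives
    set X₁ : A := ξ₁ + c₁ + τ₀*β₁ with hX₁def
    set X₂ : A := ξ₂ + c₂ + τ₀*β₂ with hX₂def
    set X₃ : A := ξ₃ + c₃ + τ₀*β₃ with hX₃def
    have mX₁ : X₁ ∈ 𝒜 3 := by
      rw [hX₁def]; exact add_mem (add_mem hξ₁ mc₁) (hDGA.mul_mem mτ₀ hβ₁)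
    have mX₂ : X₂ ∈ 𝒜 3 := by
      rw [hX₂def]; exact add_mem (add_mem hξ₂ mc₂) (hDGA.mul_mem mτ₀ hβ₂)
    have mX₃ : X₃ ∈ 𝒜 3 := by
      rw [hX₃def]; exact add_mem (add_mem hξ₃ mc₃) (hDGA.mul_mem mτ₀ hβ₃)
    have hdX₁ : d X₁ = α' * β₁ := by
      rw [hX₁def, map_add, map_add, hdξ₁, hdc₁, hDGA.dmul_odd mτ₀ ⟨0, rfl⟩, hdτ₀, hdβ₁]
      noncomm_ring
    have hdX₂ : d X₂ = α' * β₂ := by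
      rw [hX₂def, map_add, map_add, hdξ₂, hdc₂, hDGA.dmul_odd mτ₀ ⟨0, rfl⟩, hdτ₀, hdβ₂]
      noncomm_ring
    have hdX₃ : d X₃ = α' * β₃ := by
      rw [hX₃def, map_add, map_add, hdξ₃, hdc₃, hDGA.dmul_odd mτ₀ ⟨0, rfl⟩, hdτ₀, hdβ₃]
      noncomm_ring
    set Y₁ : A := X₁ + α'*τ₁ with hY₁def
    set Y₂ : A := X₂ + α'*τ₂ with hY₂def
    set Y₃ : A := X₃ + α'*τ₃ with hY₃def
    have mY₁ : Y₁ ∈ 𝒜 3 := by rw [hY₁def]; exact add_mem mX₁ (hDGA.mul_mem hα' mτ₁)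
    have mY₂ : Y₂ ∈ 𝒜 3 := by rw [hY₂def]; exact add_mem mX₂ (hDGA.mul_mem hα' mτ₂)
    have mY₃ : Y₃ ∈ 𝒜 3 := by rw [hY₃def]; exact add_mem mX₃ (hDGA.mul_mem hα' mτ₃)
    have hdY₁ : d Y₁ = α' * β₁' := by
      rw [hY₁def, map_add, hdX₁, hDGA.dmul_even hα' ⟨1, rfl⟩, hdα', hdτ₁]
      noncomm_ring
    have hdY₂ : d Y₂ = α' * β₂' := by
      rw [hY₂def, map_add, hdX₂, hDGA.dmul_even hα' ⟨1, rfl⟩, hdα', hdτ₂]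
      noncomm_ring
    have hdY₃ : d Y₃ = α' * β₃' := by
      rw [hY₃def, map_add, hdX₃, hDGA.dmul_even hα' ⟨1, rfl⟩, hdα', hdτ₃]
      noncomm_ring
    set γ₁ : A := -(τ₀*τ₁) with hγ₁def
    set γ₂ : A := -(τ₀*τ₂) with hγ₂def
    set γ₃ : A := -(τ₀*τ₃) with hγ₃def
    have mγ₁ : γ₁ ∈ 𝒜 2 := by rw [hγ₁def]; exact neg_mem (hDGA.mul_mem mτ₀ mτ₁)
    have mγ₂ : γ₂ ∈ 𝒜 2 := by rw [hγ₂def]; exact neg_mem (hDGA.mul_mem mτ₀ mτ₂)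
    have mγ₃ : γ₃ ∈ 𝒜 2 := by rw [hγ₃def]; exact neg_mem (hDGA.mul_mem mτ₀ mτ₃)
    have hdγ₁ : d γ₁ = ξ₁' - Y₁ := by
      rw [hγ₁def, hY₁def, hX₁def, hc₁def, map_neg, hDGA.dmul_odd mτ₀ ⟨0, rfl⟩, hdτ₀, hdτ₁]
      noncomm_ring
    have hdγ₂ : d γ₂ = ξ₂' - Y₂ := by
      rw [hγ₂def, hY₂def, hX₂def, hc₂def, map_neg, hDGA.dmul_odd mτ₀ ⟨0, rfl⟩, hdτ₀, hdτ₂]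
      noncomm_ring
    have hdγ₃ : d γ₃ = ξ₃' - Y₃ := by
      rw [hγ₃def, hY₃def, hX₃def, hc₃def, map_neg, hDGA.dmul_odd mτ₀ ⟨0, rfl⟩, hdτ₀, hdτ₃]
      noncomm_ring
    -- Step 1 : shifting the primitives by the closed elements cᵢ
    have a12 : (β₁*ζ₂ - ζ₁*β₂)*c₃ + (β₁*ζ₂ - ζ₁*β₂)*c₃
        = (β₁*(ξ₂+ξ₂+c₂) - (ξ₁+ξ₁+c₁)*β₂)*c₃ := by
      linear_combination (norm := noncomm_ring) β₁ * hζζ₂ * c₃ - hζζ₁ * β₂ * c₃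
    have a13 : (β₁*ζ₃ - ζ₁*β₃)*(-c₂) + (β₁*ζ₃ - ζ₁*β₃)*(-c₂)
        = (β₁*(ξ₃+ξ₃+c₃) - (ξ₁+ξ₁+c₁)*β₃)*(-c₂) := by
      linear_combination (norm := noncomm_ring) β₁ * hζζ₃ * (-c₂) - hζζ₁ * β₃ * (-c₂)
    have a23 : (β₂*ζ₃ - ζ₂*β₃)*c₁ + (β₂*ζ₃ - ζ₂*β₃)*c₁
        = (β₂*(ξ₃+ξ₃+c₃) - (ξ₂+ξ₂+c₂)*β₃)*c₁ := by
      linear_combination (norm := noncomm_ring) β₂ * hζζ₃ * c₁ - hζζ₂ * β₃ * c₁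
    have b : (((ξ₁+c₁)*(ξ₂+c₂)*β₃ + (ξ₂+c₂)*(ξ₃+c₃)*β₁ + (ξ₃+c₃)*(ξ₁+c₁)*β₂)
          - (ξ₁*ξ₂*β₃ + ξ₂*ξ₃*β₁ + ξ₃*ξ₁*β₂))
        + (((ξ₁+c₁)*(ξ₂+c₂)*β₃ + (ξ₂+c₂)*(ξ₃+c₃)*β₁ + (ξ₃+c₃)*(ξ₁+c₁)*β₂)
          - (ξ₁*ξ₂*β₃ + ξ₂*ξ₃*β₁ + ξ₃*ξ₁*β₂))
        = (β₁*(ξ₂+ξ₂+c₂) - (ξ₁+ξ₁+c₁)*β₂)*c₃ + (β₁*(ξ₃+ξ₃+c₃) - (ξ₁+ξ₁+c₁)*β₃)*(-c₂)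
          + (β₂*(ξ₃+ξ₃+c₃) - (ξ₂+ξ₂+c₂)*β₃)*c₁ := by
      linear_combination (norm := noncomm_ring)
        (hDGA.comm mc₂ hβ₃ ⟨3, rfl⟩) * c₁ +
      β₃ * (hDGA.acomm mc₂ mc₁ ⟨4, rfl⟩) +
      (hDGA.comm hξ₂ hβ₃ ⟨3, rfl⟩) * c₁ +
      (hDGA.comm hξ₂ hβ₃ ⟨3, rfl⟩) * c₁ -
      β₂ * (hDGA.acomm mc₃ mc₁ ⟨4, rfl⟩) -
      (hDGA.comm mc₁ hβ₃ ⟨3, rfl⟩) * c₂ -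
      (hDGA.comm hξ₁ hβ₃ ⟨3, rfl⟩) * c₂ -
      (hDGA.comm hξ₁ hβ₃ ⟨3, rfl⟩) * c₂ +
      β₁ * (hDGA.acomm mc₃ mc₂ ⟨4, rfl⟩) +
      (hDGA.comm mc₁ hβ₂ ⟨3, rfl⟩) * c₃ +
      (hDGA.comm hξ₁ hβ₂ ⟨3, rfl⟩) * c₃ +
      (hDGA.comm hξ₁ hβ₂ ⟨3, rfl⟩) * c₃ +
      (hDGA.acomm mc₃ mc₁ ⟨4, rfl⟩) * β₂ +
      (hDGA.acomm mc₃ mc₁ ⟨4, rfl⟩) * β₂ -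
      c₁ * (hDGA.comm mc₃ hβ₂ ⟨3, rfl⟩) -
      c₁ * (hDGA.comm mc₃ hβ₂ ⟨3, rfl⟩) -
      (hDGA.comm mc₁ hβ₂ ⟨3, rfl⟩) * c₃ -
      (hDGA.comm mc₁ hβ₂ ⟨3, rfl⟩) * c₃ +
      (hDGA.acomm mc₃ hξ₁ ⟨4, rfl⟩) * β₂ +
      (hDGA.acomm mc₃ hξ₁ ⟨4, rfl⟩) * β₂ -
      ξ₁ * (hDGA.comm mc₃ hβ₂ ⟨3, rfl⟩) -
      ξ₁ * (hDGA.comm mc₃ hβ₂ ⟨3, rfl⟩) -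
      (hDGA.comm hξ₁ hβ₂ ⟨3, rfl⟩) * c₃ -
      (hDGA.comm hξ₁ hβ₂ ⟨3, rfl⟩) * c₃ +
      ξ₃ * (hDGA.comm mc₁ hβ₂ ⟨3, rfl⟩) +
      ξ₃ * (hDGA.comm mc₁ hβ₂ ⟨3, rfl⟩) +
      (hDGA.comm hξ₃ hβ₂ ⟨3, rfl⟩) * c₁ +
      (hDGA.comm hξ₃ hβ₂ ⟨3, rfl⟩) * c₁ +
      c₂ * (hDGA.comm mc₃ hβ₁ ⟨3, rfl⟩) +
      c₂ * (hDGA.comm mc₃ hβ₁ ⟨3, rfl⟩) +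
      (hDGA.comm mc₂ hβ₁ ⟨3, rfl⟩) * c₃ +
      (hDGA.comm mc₂ hβ₁ ⟨3, rfl⟩) * c₃ +
      (hDGA.acomm mc₂ hξ₃ ⟨4, rfl⟩) * β₁ +
      (hDGA.acomm mc₂ hξ₃ ⟨4, rfl⟩) * β₁ -
      ξ₃ * (hDGA.comm mc₂ hβ₁ ⟨3, rfl⟩) -
      ξ₃ * (hDGA.comm mc₂ hβ₁ ⟨3, rfl⟩) -
      (hDGA.comm hξ₃ hβ₁ ⟨3, rfl⟩) * c₂ -
      (hDGA.comm hξ₃ hβ₁ ⟨3, rfl⟩) * c₂ +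
      ξ₂ * (hDGA.comm mc₃ hβ₁ ⟨3, rfl⟩) +
      ξ₂ * (hDGA.comm mc₃ hβ₁ ⟨3, rfl⟩) +
      (hDGA.comm hξ₂ hβ₁ ⟨3, rfl⟩) * c₃ +
      (hDGA.comm hξ₂ hβ₁ ⟨3, rfl⟩) * c₃ +
      c₁ * (hDGA.comm mc₂ hβ₃ ⟨3, rfl⟩) +
      c₁ * (hDGA.comm mc₂ hβ₃ ⟨3, rfl⟩) +
      (hDGA.comm mc₁ hβ₃ ⟨3, rfl⟩) * c₂ +
      (hDGA.comm mc₁ hβ₃ ⟨3, rfl⟩) * c₂ +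
      (hDGA.acomm mc₁ hξ₂ ⟨4, rfl⟩) * β₃ +
      (hDGA.acomm mc₁ hξ₂ ⟨4, rfl⟩) * β₃ -
      ξ₂ * (hDGA.comm mc₁ hβ₃ ⟨3, rfl⟩) -
      ξ₂ * (hDGA.comm mc₁ hβ₃ ⟨3, rfl⟩) -
      (hDGA.comm hξ₂ hβ₃ ⟨3, rfl⟩) * c₁ -
      (hDGA.comm hξ₂ hβ₃ ⟨3, rfl⟩) * c₁ +
      ξ₁ * (hDGA.comm mc₂ hβ₃ ⟨3, rfl⟩) +
      ξ₁ * (hDGA.comm mc₂ hβ₃ ⟨3, rfl⟩) +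
      (hDGA.comm hξ₁ hβ₃ ⟨3, rfl⟩) * c₂ +
      (hDGA.comm hξ₁ hβ₃ ⟨3, rfl⟩) * c₂
    have E1 : ((ξ₁+c₁)*(ξ₂+c₂)*β₃ + (ξ₂+c₂)*(ξ₃+c₃)*β₁ + (ξ₃+c₃)*(ξ₁+c₁)*β₂)
          - (ξ₁*ξ₂*β₃ + ξ₂*ξ₃*β₁ + ξ₃*ξ₁*β₂)
        = (β₁*ζ₂ - ζ₁*β₂)*c₃ + (β₁*ζ₃ - ζ₁*β₃)*(-c₂) + (β₂*ζ₃ - ζ₂*β₃)*c₁ :=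
      massey_half_cancel (by linear_combination (norm := noncomm_ring) b - a12 - a13 - a23)
    -- Step 2 : changing α does not change the product
    have E2 : X₁*X₂*β₃ + X₂*X₃*β₁ + X₃*X₁*β₂
        = (ξ₁+c₁)*(ξ₂+c₂)*β₃ + (ξ₂+c₂)*(ξ₃+c₃)*β₁ + (ξ₃+c₃)*(ξ₁+c₁)*β₂ := by
      linear_combination (norm := noncomm_ring)
        - (hDGA.acomm mc₃ mc₁ ⟨4, rfl⟩) * β₂ +
      c₁ * (hDGA.comm mc₃ hβ₂ ⟨3, rfl⟩) +
      (hDGA.comm mc₁ hβ₂ ⟨3, rfl⟩) * c₃ -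
      (hDGA.acomm mc₃ hξ₁ ⟨4, rfl⟩) * β₂ +
      ξ₁ * (hDGA.comm mc₃ hβ₂ ⟨3, rfl⟩) +
      (hDGA.comm hξ₁ hβ₂ ⟨3, rfl⟩) * c₃ -
      ξ₃ * (hDGA.comm mc₁ hβ₂ ⟨3, rfl⟩) -
      (hDGA.comm hξ₃ hβ₂ ⟨3, rfl⟩) * c₁ -
      (hDGA.acomm hξ₃ hξ₁ ⟨4, rfl⟩) * β₂ +
      ξ₁ * (hDGA.comm hξ₃ hβ₂ ⟨3, rfl⟩) +
      (hDGA.comm hξ₁ hβ₂ ⟨3, rfl⟩) * ξ₃ -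
      c₂ * (hDGA.comm mc₃ hβ₁ ⟨3, rfl⟩) -
      (hDGA.comm mc₂ hβ₁ ⟨3, rfl⟩) * c₃ -
      (hDGA.acomm mc₂ hξ₃ ⟨4, rfl⟩) * β₁ +
      ξ₃ * (hDGA.comm mc₂ hβ₁ ⟨3, rfl⟩) +
      (hDGA.comm hξ₃ hβ₁ ⟨3, rfl⟩) * c₂ -
      ξ₂ * (hDGA.comm mc₃ hβ₁ ⟨3, rfl⟩) -
      (hDGA.comm hξ₂ hβ₁ ⟨3, rfl⟩) * c₃ -
      ξ₂ * (hDGA.comm hξ₃ hβ₁ ⟨3, rfl⟩) -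
      (hDGA.comm hξ₂ hβ₁ ⟨3, rfl⟩) * ξ₃ -
      c₁ * (hDGA.comm mc₂ hβ₃ ⟨3, rfl⟩) -
      (hDGA.comm mc₁ hβ₃ ⟨3, rfl⟩) * c₂ -
      (hDGA.acomm mc₁ hξ₂ ⟨4, rfl⟩) * β₃ +
      ξ₂ * (hDGA.comm mc₁ hβ₃ ⟨3, rfl⟩) +
      (hDGA.comm hξ₂ hβ₃ ⟨3, rfl⟩) * c₁ -
      ξ₁ * (hDGA.comm mc₂ hβ₃ ⟨3, rfl⟩) -
      (hDGA.comm hξ₁ hβ₃ ⟨3, rfl⟩) * c₂ -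
      ξ₁ * (hDGA.comm hξ₂ hβ₃ ⟨3, rfl⟩) -
      (hDGA.comm hξ₁ hβ₃ ⟨3, rfl⟩) * ξ₂ +
      hX₃def * X₁ * β₂ +
      τ₀ * β₃ * hX₁def * β₂ +
      τ₀ * (hDGA.comm hβ₃ mτ₀ ⟨1, rfl⟩) * β₁ * β₂ +
      (hDGA.odd_sq mτ₀ ⟨0, rfl⟩) * β₃ * β₁ * β₂ +
      τ₀ * β₃ * (hDGA.comm mc₁ hβ₂ ⟨3, rfl⟩) +
      τ₀ * (hDGA.comm hβ₃ hβ₂ ⟨2, rfl⟩) * c₁ +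
      τ₀ * β₃ * (hDGA.comm hξ₁ hβ₂ ⟨3, rfl⟩) +
      τ₀ * (hDGA.comm hβ₃ hβ₂ ⟨2, rfl⟩) * ξ₁ +
      c₃ * hX₁def * β₂ +
      (hDGA.acomm mc₃ mτ₀ ⟨1, rfl⟩) * β₁ * β₂ -
      τ₀ * (hDGA.comm mc₃ hβ₁ ⟨3, rfl⟩) * β₂ -
      τ₀ * β₁ * (hDGA.comm mc₃ hβ₂ ⟨3, rfl⟩) +
      (hDGA.acomm mc₃ mc₁ ⟨4, rfl⟩) * β₂ -
      c₁ * (hDGA.comm mc₃ hβ₂ ⟨3, rfl⟩) -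
      (hDGA.comm mc₁ hβ₂ ⟨3, rfl⟩) * c₃ +
      (hDGA.acomm mc₃ hξ₁ ⟨4, rfl⟩) * β₂ -
      ξ₁ * (hDGA.comm mc₃ hβ₂ ⟨3, rfl⟩) -
      (hDGA.comm hξ₁ hβ₂ ⟨3, rfl⟩) * c₃ +
      ξ₃ * hX₁def * β₂ +
      (hDGA.acomm hξ₃ mτ₀ ⟨1, rfl⟩) * β₁ * β₂ -
      τ₀ * (hDGA.comm hξ₃ hβ₁ ⟨3, rfl⟩) * β₂ -
      τ₀ * β₁ * (hDGA.comm hξ₃ hβ₂ ⟨3, rfl⟩) +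
      ξ₃ * (hDGA.comm mc₁ hβ₂ ⟨3, rfl⟩) +
      (hDGA.comm hξ₃ hβ₂ ⟨3, rfl⟩) * c₁ +
      (hDGA.acomm hξ₃ hξ₁ ⟨4, rfl⟩) * β₂ -
      ξ₁ * (hDGA.comm hξ₃ hβ₂ ⟨3, rfl⟩) -
      (hDGA.comm hξ₁ hβ₂ ⟨3, rfl⟩) * ξ₃ +
      hX₂def * X₃ * β₁ +
      τ₀ * β₂ * hX₃def * β₁ +
      τ₀ * (hDGA.comm hβ₂ mτ₀ ⟨1, rfl⟩) * β₃ * β₁ +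
      (hDGA.odd_sq mτ₀ ⟨0, rfl⟩) * β₂ * β₃ * β₁ +
      τ₀ * β₂ * (hDGA.comm mc₃ hβ₁ ⟨3, rfl⟩) +
      τ₀ * (hDGA.comm hβ₂ hβ₁ ⟨2, rfl⟩) * c₃ +
      τ₀ * β₂ * (hDGA.comm hξ₃ hβ₁ ⟨3, rfl⟩) +
      τ₀ * (hDGA.comm hβ₂ hβ₁ ⟨2, rfl⟩) * ξ₃ +
      c₂ * hX₃def * β₁ +
      (hDGA.acomm mc₂ mτ₀ ⟨1, rfl⟩) * β₃ * β₁ -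
      τ₀ * (hDGA.comm mc₂ hβ₃ ⟨3, rfl⟩) * β₁ -
      τ₀ * β₃ * (hDGA.comm mc₂ hβ₁ ⟨3, rfl⟩) -
      τ₀ * (hDGA.comm hβ₃ hβ₁ ⟨2, rfl⟩) * c₂ +
      c₂ * (hDGA.comm mc₃ hβ₁ ⟨3, rfl⟩) +
      (hDGA.comm mc₂ hβ₁ ⟨3, rfl⟩) * c₃ +
      (hDGA.acomm mc₂ hξ₃ ⟨4, rfl⟩) * β₁ -
      ξ₃ * (hDGA.comm mc₂ hβ₁ ⟨3, rfl⟩) -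
      (hDGA.comm hξ₃ hβ₁ ⟨3, rfl⟩) * c₂ +
      ξ₂ * hX₃def * β₁ +
      (hDGA.acomm hξ₂ mτ₀ ⟨1, rfl⟩) * β₃ * β₁ -
      τ₀ * (hDGA.comm hξ₂ hβ₃ ⟨3, rfl⟩) * β₁ -
      τ₀ * β₃ * (hDGA.comm hξ₂ hβ₁ ⟨3, rfl⟩) -
      τ₀ * (hDGA.comm hβ₃ hβ₁ ⟨2, rfl⟩) * ξ₂ +
      ξ₂ * (hDGA.comm mc₃ hβ₁ ⟨3, rfl⟩) +
      (hDGA.comm hξ₂ hβ₁ ⟨3, rfl⟩) * c₃ +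
      ξ₂ * (hDGA.comm hξ₃ hβ₁ ⟨3, rfl⟩) +
      (hDGA.comm hξ₂ hβ₁ ⟨3, rfl⟩) * ξ₃ +
      hX₁def * X₂ * β₃ +
      τ₀ * β₁ * hX₂def * β₃ +
      τ₀ * (hDGA.comm hβ₁ mτ₀ ⟨1, rfl⟩) * β₂ * β₃ +
      (hDGA.odd_sq mτ₀ ⟨0, rfl⟩) * β₁ * β₂ * β₃ +
      τ₀ * β₁ * (hDGA.comm mc₂ hβ₃ ⟨3, rfl⟩) +
      τ₀ * β₁ * (hDGA.comm hξ₂ hβ₃ ⟨3, rfl⟩) +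
      c₁ * hX₂def * β₃ +
      (hDGA.acomm mc₁ mτ₀ ⟨1, rfl⟩) * β₂ * β₃ -
      τ₀ * (hDGA.comm mc₁ hβ₂ ⟨3, rfl⟩) * β₃ -
      τ₀ * β₂ * (hDGA.comm mc₁ hβ₃ ⟨3, rfl⟩) +
      c₁ * (hDGA.comm mc₂ hβ₃ ⟨3, rfl⟩) +
      (hDGA.comm mc₁ hβ₃ ⟨3, rfl⟩) * c₂ +
      (hDGA.acomm mc₁ hξ₂ ⟨4, rfl⟩) * β₃ -
      ξ₂ * (hDGA.comm mc₁ hβ₃ ⟨3, rfl⟩) -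
      (hDGA.comm hξ₂ hβ₃ ⟨3, rfl⟩) * c₁ +
      ξ₁ * hX₂def * β₃ +
      (hDGA.acomm hξ₁ mτ₀ ⟨1, rfl⟩) * β₂ * β₃ -
      τ₀ * (hDGA.comm hξ₁ hβ₂ ⟨3, rfl⟩) * β₃ -
      τ₀ * β₂ * (hDGA.comm hξ₁ hβ₃ ⟨3, rfl⟩) +
      ξ₁ * (hDGA.comm mc₂ hβ₃ ⟨3, rfl⟩) +
      (hDGA.comm hξ₁ hβ₃ ⟨3, rfl⟩) * c₂ +
      ξ₁ * (hDGA.comm hξ₂ hβ₃ ⟨3, rfl⟩) +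
      (hDGA.comm hξ₁ hβ₃ ⟨3, rfl⟩) * ξ₂
    -- Step 3 : changing β₁
    have e3a : d (X₂*X₃) = α'*β₂*X₃ - X₂*(α'*β₃) := by
      rw [hDGA.dmul_odd mX₂ ⟨1, rfl⟩, hdX₂, hdX₃]
    have e3b : d (X₂*X₃*τ₁) = (α'*β₂*X₃ - X₂*(α'*β₃))*τ₁ + X₂*X₃*(β₁'-β₁) := by
      rw [hDGA.dmul_even (hDGA.mul_mem mX₂ mX₃) ⟨3, rfl⟩, e3a, hdτ₁]
    have E3 : (Y₁*X₂*β₃ + X₂*X₃*β₁' + X₃*Y₁*β₂) - (X₁*X₂*β₃ + X₂*X₃*β₁ + X₃*X₁*β₂)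
        = d (X₂*X₃*τ₁) := by
      rw [e3b]
      linear_combination (norm := noncomm_ring)
        (hDGA.comm mX₂ hα' ⟨3, rfl⟩) * β₃ * τ₁ +
      α' * (hDGA.comm mX₂ hβ₃ ⟨3, rfl⟩) * τ₁ +
      α' * β₃ * (hDGA.acomm mX₂ mτ₁ ⟨1, rfl⟩) -
      α' * (hDGA.comm hβ₃ mτ₁ ⟨1, rfl⟩) * X₂ -
      (hDGA.comm hα' mτ₁ ⟨1, rfl⟩) * β₃ * X₂ -
      α' * β₂ * (hDGA.acomm mX₃ mτ₁ ⟨1, rfl⟩) +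
      α' * (hDGA.comm hβ₂ mτ₁ ⟨1, rfl⟩) * X₃ +
      (hDGA.comm hα' mτ₁ ⟨1, rfl⟩) * β₂ * X₃ -
      (hDGA.acomm mX₃ mX₁ ⟨4, rfl⟩) * β₂ +
      X₁ * (hDGA.comm mX₃ hβ₂ ⟨3, rfl⟩) +
      (hDGA.comm mX₁ hβ₂ ⟨3, rfl⟩) * X₃ -
      X₁ * (hDGA.comm mX₂ hβ₃ ⟨3, rfl⟩) -
      (hDGA.comm mX₁ hβ₃ ⟨3, rfl⟩) * X₂ +
      X₃ * hY₁def * β₂ +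
      (hDGA.comm mX₃ hα' ⟨3, rfl⟩) * τ₁ * β₂ +
      α' * (hDGA.acomm mX₃ mτ₁ ⟨1, rfl⟩) * β₂ -
      (hDGA.comm hα' mτ₁ ⟨1, rfl⟩) * X₃ * β₂ -
      τ₁ * α' * (hDGA.comm mX₃ hβ₂ ⟨3, rfl⟩) +
      (hDGA.acomm mX₃ mX₁ ⟨4, rfl⟩) * β₂ -
      X₁ * (hDGA.comm mX₃ hβ₂ ⟨3, rfl⟩) -
      (hDGA.comm mX₁ hβ₂ ⟨3, rfl⟩) * X₃ +
      hY₁def * X₂ * β₃ +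
      (hDGA.comm hα' mτ₁ ⟨1, rfl⟩) * X₂ * β₃ +
      τ₁ * α' * (hDGA.comm mX₂ hβ₃ ⟨3, rfl⟩) +
      X₁ * (hDGA.comm mX₂ hβ₃ ⟨3, rfl⟩) +
      (hDGA.comm mX₁ hβ₃ ⟨3, rfl⟩) * X₂
    -- Step 4 : changing β₂
    have e4a : d (X₃*Y₁) = α'*β₃*Y₁ - X₃*(α'*β₁') := by
      rw [hDGA.dmul_odd mX₃ ⟨1, rfl⟩, hdX₃, hdY₁]
    have e4b : d (X₃*Y₁*τ₂) = (α'*β₃*Y₁ - X₃*(α'*β₁'))*τ₂ + X₃*Y₁*(β₂'-β₂) := by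
      rw [hDGA.dmul_even (hDGA.mul_mem mX₃ mY₁) ⟨3, rfl⟩, e4a, hdτ₂]
    have E4 : (Y₁*Y₂*β₃ + Y₂*X₃*β₁' + X₃*Y₁*β₂') - (Y₁*X₂*β₃ + X₂*X₃*β₁' + X₃*Y₁*β₂)
        = d (X₃*Y₁*τ₂) := by
      rw [e4b]
      linear_combination (norm := noncomm_ring)
        (hDGA.comm mX₃ hα' ⟨3, rfl⟩) * β₁' * τ₂ +
      α' * (hDGA.comm mX₃ hβ₁' ⟨3, rfl⟩) * τ₂ +
      α' * β₁' * (hDGA.acomm mX₃ mτ₂ ⟨1, rfl⟩) -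
      α' * (hDGA.comm hβ₁' mτ₂ ⟨1, rfl⟩) * X₃ -
      (hDGA.comm hα' mτ₂ ⟨1, rfl⟩) * β₁' * X₃ -
      α' * β₃ * (hDGA.acomm mY₁ mτ₂ ⟨1, rfl⟩) +
      α' * (hDGA.comm hβ₃ mτ₂ ⟨1, rfl⟩) * Y₁ +
      (hDGA.comm hα' mτ₂ ⟨1, rfl⟩) * β₃ * Y₁ -
      X₂ * (hDGA.comm mX₃ hβ₁' ⟨3, rfl⟩) -
      (hDGA.comm mX₂ hβ₁' ⟨3, rfl⟩) * X₃ -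
      (hDGA.acomm mY₁ mX₂ ⟨4, rfl⟩) * β₃ +
      X₂ * (hDGA.comm mY₁ hβ₃ ⟨3, rfl⟩) +
      (hDGA.comm mX₂ hβ₃ ⟨3, rfl⟩) * Y₁ +
      hY₂def * X₃ * β₁' +
      (hDGA.comm hα' mτ₂ ⟨1, rfl⟩) * X₃ * β₁' +
      τ₂ * α' * (hDGA.comm mX₃ hβ₁' ⟨3, rfl⟩) +
      X₂ * (hDGA.comm mX₃ hβ₁' ⟨3, rfl⟩) +
      (hDGA.comm mX₂ hβ₁' ⟨3, rfl⟩) * X₃ +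
      Y₁ * hY₂def * β₃ +
      (hDGA.comm mY₁ hα' ⟨3, rfl⟩) * τ₂ * β₃ +
      α' * (hDGA.acomm mY₁ mτ₂ ⟨1, rfl⟩) * β₃ -
      (hDGA.comm hα' mτ₂ ⟨1, rfl⟩) * Y₁ * β₃ -
      τ₂ * α' * (hDGA.comm mY₁ hβ₃ ⟨3, rfl⟩) +
      (hDGA.acomm mY₁ mX₂ ⟨4, rfl⟩) * β₃ -
      X₂ * (hDGA.comm mY₁ hβ₃ ⟨3, rfl⟩) -
      (hDGA.comm mX₂ hβ₃ ⟨3, rfl⟩) * Y₁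
    -- Step 5 : changing β₃
    have e5a : d (Y₁*Y₂) = α'*β₁'*Y₂ - Y₁*(α'*β₂') := by
      rw [hDGA.dmul_odd mY₁ ⟨1, rfl⟩, hdY₁, hdY₂]
    have e5b : d (Y₁*Y₂*τ₃) = (α'*β₁'*Y₂ - Y₁*(α'*β₂'))*τ₃ + Y₁*Y₂*(β₃'-β₃) := by
      rw [hDGA.dmul_even (hDGA.mul_mem mY₁ mY₂) ⟨3, rfl⟩, e5a, hdτ₃]
    have E5 : (Y₁*Y₂*β₃' + Y₂*Y₃*β₁' + Y₃*Y₁*β₂') - (Y₁*Y₂*β₃ + Y₂*X₃*β₁' + X₃*Y₁*β₂')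
        = d (Y₁*Y₂*τ₃) := by
      rw [e5b]
      linear_combination (norm := noncomm_ring)
        (hDGA.comm mY₁ hα' ⟨3, rfl⟩) * β₂' * τ₃ +
      α' * (hDGA.comm mY₁ hβ₂' ⟨3, rfl⟩) * τ₃ +
      α' * β₂' * (hDGA.acomm mY₁ mτ₃ ⟨1, rfl⟩) -
      α' * (hDGA.comm hβ₂' mτ₃ ⟨1, rfl⟩) * Y₁ -
      (hDGA.comm hα' mτ₃ ⟨1, rfl⟩) * β₂' * Y₁ -
      α' * β₁' * (hDGA.acomm mY₂ mτ₃ ⟨1, rfl⟩) +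
      α' * (hDGA.comm hβ₁' mτ₃ ⟨1, rfl⟩) * Y₂ +
      (hDGA.comm hα' mτ₃ ⟨1, rfl⟩) * β₁' * Y₂ -
      X₃ * (hDGA.comm mY₁ hβ₂' ⟨3, rfl⟩) -
      (hDGA.comm mX₃ hβ₂' ⟨3, rfl⟩) * Y₁ -
      (hDGA.acomm mY₂ mX₃ ⟨4, rfl⟩) * β₁' +
      X₃ * (hDGA.comm mY₂ hβ₁' ⟨3, rfl⟩) +
      (hDGA.comm mX₃ hβ₁' ⟨3, rfl⟩) * Y₂ +
      hY₃def * Y₁ * β₂' +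
      (hDGA.comm hα' mτ₃ ⟨1, rfl⟩) * Y₁ * β₂' +
      τ₃ * α' * (hDGA.comm mY₁ hβ₂' ⟨3, rfl⟩) +
      X₃ * (hDGA.comm mY₁ hβ₂' ⟨3, rfl⟩) +
      (hDGA.comm mX₃ hβ₂' ⟨3, rfl⟩) * Y₁ +
      Y₂ * hY₃def * β₁' +
      (hDGA.comm mY₂ hα' ⟨3, rfl⟩) * τ₃ * β₁' +
      α' * (hDGA.acomm mY₂ mτ₃ ⟨1, rfl⟩) * β₁' -
      (hDGA.comm hα' mτ₃ ⟨1, rfl⟩) * Y₂ * β₁' -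
      τ₃ * α' * (hDGA.comm mY₂ hβ₁' ⟨3, rfl⟩) +
      (hDGA.acomm mY₂ mX₃ ⟨4, rfl⟩) * β₁' -
      X₃ * (hDGA.comm mY₂ hβ₁' ⟨3, rfl⟩) -
      (hDGA.comm mX₃ hβ₁' ⟨3, rfl⟩) * Y₂
    -- Step 6 : shifting ξ₁ by an exact term
    have e6a : d (γ₁*Y₂) = (ξ₁'-Y₁)*Y₂ + γ₁*(α'*β₂') := by
      rw [hDGA.dmul_even mγ₁ ⟨1, rfl⟩, hdγ₁, hdY₂]
    have e6b : d (γ₁*Y₂*β₃') = ((ξ₁'-Y₁)*Y₂ + γ₁*(α'*β₂'))*β₃' := by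
      rw [hDGA.dmul_odd (hDGA.mul_mem mγ₁ mY₂) ⟨2, rfl⟩, e6a, hdβ₃', mul_zero, sub_zero]
    have e6c : d (Y₃*(γ₁*β₂')) = α'*β₃'*(γ₁*β₂') - Y₃*((ξ₁'-Y₁)*β₂') := by
      rw [hDGA.dmul_odd mY₃ ⟨1, rfl⟩, hdY₃, hDGA.dmul_even mγ₁ ⟨1, rfl⟩, hdγ₁, hdβ₂',
        mul_zero, add_zero]
    have E6 : (ξ₁'*Y₂*β₃' + Y₂*Y₃*β₁' + Y₃*ξ₁'*β₂') - (Y₁*Y₂*β₃' + Y₂*Y₃*β₁' + Y₃*Y₁*β₂')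
        = d (γ₁*Y₂*β₃' - Y₃*(γ₁*β₂')) := by
      rw [map_sub, e6b, e6c]
      linear_combination (norm := noncomm_ring)
        α' * β₃' * (hDGA.comm mγ₁ hβ₂' ⟨2, rfl⟩) +
      α' * (hDGA.comm hβ₃' hβ₂' ⟨2, rfl⟩) * γ₁ -
      (hDGA.comm mγ₁ hα' ⟨2, rfl⟩) * β₂' * β₃' -
      α' * (hDGA.comm mγ₁ hβ₂' ⟨2, rfl⟩) * β₃' -
      α' * β₂' * (hDGA.comm mγ₁ hβ₃' ⟨2, rfl⟩)
    -- Step 7 : shifting ξ₂ by an exact term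
    have e7a : d (γ₂*Y₃) = (ξ₂'-Y₂)*Y₃ + γ₂*(α'*β₃') := by
      rw [hDGA.dmul_even mγ₂ ⟨1, rfl⟩, hdγ₂, hdY₃]
    have e7b : d (γ₂*Y₃*β₁') = ((ξ₂'-Y₂)*Y₃ + γ₂*(α'*β₃'))*β₁' := by
      rw [hDGA.dmul_odd (hDGA.mul_mem mγ₂ mY₃) ⟨2, rfl⟩, e7a, hdβ₁', mul_zero, sub_zero]
    have e7c : d (ξ₁'*(γ₂*β₃')) = α'*β₁'*(γ₂*β₃') - ξ₁'*((ξ₂'-Y₂)*β₃') := by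
      rw [hDGA.dmul_odd hξ₁' ⟨1, rfl⟩, hdξ₁', hDGA.dmul_even mγ₂ ⟨1, rfl⟩, hdγ₂, hdβ₃',
        mul_zero, add_zero]
    have E7 : (ξ₁'*ξ₂'*β₃' + ξ₂'*Y₃*β₁' + Y₃*ξ₁'*β₂') - (ξ₁'*Y₂*β₃' + Y₂*Y₃*β₁' + Y₃*ξ₁'*β₂')
        = d (γ₂*Y₃*β₁' - ξ₁'*(γ₂*β₃')) := by
      rw [map_sub, e7b, e7c]
      linear_combination (norm := noncomm_ring)
        α' * β₁' * (hDGA.comm mγ₂ hβ₃' ⟨2, rfl⟩) -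
      (hDGA.comm mγ₂ hα' ⟨2, rfl⟩) * β₃' * β₁' -
      α' * (hDGA.comm mγ₂ hβ₃' ⟨2, rfl⟩) * β₁' -
      α' * β₃' * (hDGA.comm mγ₂ hβ₁' ⟨2, rfl⟩) -
      α' * (hDGA.comm hβ₃' hβ₁' ⟨2, rfl⟩) * γ₂
    -- Step 8 : shifting ξ₃ by an exact term
    have e8a : d (γ₃*ξ₁') = (ξ₃'-Y₃)*ξ₁' + γ₃*(α'*β₁') := by
      rw [hDGA.dmul_even mγ₃ ⟨1, rfl⟩, hdγ₃, hdξ₁']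
    have e8b : d (γ₃*ξ₁'*β₂') = ((ξ₃'-Y₃)*ξ₁' + γ₃*(α'*β₁'))*β₂' := by
      rw [hDGA.dmul_odd (hDGA.mul_mem mγ₃ hξ₁') ⟨2, rfl⟩, e8a, hdβ₂', mul_zero, sub_zero]
    have e8c : d (ξ₂'*(γ₃*β₁')) = α'*β₂'*(γ₃*β₁') - ξ₂'*((ξ₃'-Y₃)*β₁') := by
      rw [hDGA.dmul_odd hξ₂' ⟨1, rfl⟩, hdξ₂', hDGA.dmul_even mγ₃ ⟨1, rfl⟩, hdγ₃, hdβ₁',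
        mul_zero, add_zero]
    have E8 : (ξ₁'*ξ₂'*β₃' + ξ₂'*ξ₃'*β₁' + ξ₃'*ξ₁'*β₂') - (ξ₁'*ξ₂'*β₃' + ξ₂'*Y₃*β₁' + Y₃*ξ₁'*β₂')
        = d (γ₃*ξ₁'*β₂' - ξ₂'*(γ₃*β₁')) := by
      rw [map_sub, e8b, e8c]
      linear_combination (norm := noncomm_ring)
        α' * β₂' * (hDGA.comm mγ₃ hβ₁' ⟨2, rfl⟩) +
      α' * (hDGA.comm hβ₂' hβ₁' ⟨2, rfl⟩) * γ₃ -
      (hDGA.comm mγ₃ hα' ⟨2, rfl⟩) * β₁' * β₂' -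
      α' * (hDGA.comm mγ₃ hβ₁' ⟨2, rfl⟩) * β₂' -
      α' * β₁' * (hDGA.comm mγ₃ hβ₂' ⟨2, rfl⟩)
    -- assemble everything
    refine ⟨ζ₁, mζ₁, hdζ₁, ζ₂, mζ₂, hdζ₂, ζ₃, mζ₃, hdζ₃,
      c₃, mc₃, hdc₃, -c₂, neg_mem mc₂, by rw [map_neg, hdc₂, neg_zero], c₁, mc₁, hdc₁,
      X₂*X₃*τ₁ + X₃*Y₁*τ₂ + Y₁*Y₂*τ₃ + (γ₁*Y₂*β₃' - Y₃*(γ₁*β₂'))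
        + (γ₂*Y₃*β₁' - ξ₁'*(γ₂*β₃')) + (γ₃*ξ₁'*β₂' - ξ₂'*(γ₃*β₁')), ?_, ?_⟩
    · exact add_mem (add_mem (add_mem (add_mem (add_mem
        (hDGA.mul_mem (hDGA.mul_mem mX₂ mX₃) mτ₁)
        (hDGA.mul_mem (hDGA.mul_mem mX₃ mY₁) mτ₂))
        (hDGA.mul_mem (hDGA.mul_mem mY₁ mY₂) mτ₃))
        (sub_mem (hDGA.mul_mem (hDGA.mul_mem mγ₁ mY₂) hβ₃')
          (hDGA.mul_mem mY₃ (hDGA.mul_mem mγ₁ hβ₂'))))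
        (sub_mem (hDGA.mul_mem (hDGA.mul_mem mγ₂ mY₃) hβ₁')
          (hDGA.mul_mem hξ₁' (hDGA.mul_mem mγ₂ hβ₃'))))
        (sub_mem (hDGA.mul_mem (hDGA.mul_mem mγ₃ hξ₁') hβ₂')
          (hDGA.mul_mem hξ₂' (hDGA.mul_mem mγ₃ hβ₁')))
    · simp only [map_add]
      linear_combination (norm := noncomm_ring) E1 + E2 + E3 + E4 + E5 + E6 + E7 + E8
end

section
/- On the Lie group G(p,q) = H(1,p;ℝ) × H(1,q;ℝ) with left-invariant 1-forms α_1,…,α_p, β, γ_1,…,γ_p from the first factor and α̃_1,…,α̃_q, β̃, γ̃_1,…,γ̃_q from the second, the left-invariant 2-form ω = Σ_{i=1}^p α_i ∧ γ_i + Σ_{i=1}^q α̃_i ∧ γ̃_i + β ∧ β̃ is closed and nondegenerate, hence a symplectic form on the (2p+2q+2)-dimensional group G(p,q). -/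
noncomputable section

/-- Coordinates `(x, y, z)` of the generalized Heisenberg group `H(1,p;ℝ)`. -/
abbrev HSp (p : ℕ) := (Fin p → ℝ) × ℝ × (Fin p → ℝ)

/-- Multiplication of `H(1,p;ℝ)` in coordinates. -/
def Hmul (p : ℕ) (g m : HSp p) : HSp p :=
  (g.1 + m.1, g.2.1 + m.2.1, g.2.2 + m.2.2 + m.2.1 • g.1)

/-- The underlying space of `G(p,q) = H(1,p;ℝ) × H(1,q;ℝ)`. -/
abbrev GSp (p q : ℕ) := HSp p × HSp q

/-- Multiplication of the Lie group `G(p,q)`. -/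
def Gmul (p q : ℕ) (g m : GSp p q) : GSp p q :=
  (Hmul p g.1 m.1, Hmul q g.2 m.2)

/-- `1`-forms on `G(p,q)`, given pointwise on tangent vectors. -/
abbrev OneForm (p q : ℕ) := GSp p q → GSp p q → ℝ

/-- `2`-forms on `G(p,q)`, given pointwise on pairs of tangent vectors. -/
abbrev TwoForm (p q : ℕ) := GSp p q → GSp p q → GSp p q → ℝ

/-- The wedge product of two `1`-forms. -/
def wedge {p q : ℕ} (ω τ : OneForm p q) : TwoForm p q := fun m u v =>
  ω m u * τ m v - ω m v * τ m u

/-- The exterior derivative of a `2`-form. -/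
def extd2 {p q : ℕ} (Ω : TwoForm p q) (m u v w : GSp p q) : ℝ :=
  fderiv ℝ (fun x => Ω x v w) m u - fderiv ℝ (fun x => Ω x u w) m v +
    fderiv ℝ (fun x => Ω x u v) m w

/-- Left invariance of a `2`-form on `G(p,q)`. -/
def LeftInvariant2 {p q : ℕ} (Ω : TwoForm p q) : Prop :=
  ∀ g m u v, Ω (Gmul p q g m) (fderiv ℝ (Gmul p q g) m u)
      (fderiv ℝ (Gmul p q g) m v) = Ω m u v

/-- `α_i = dx_i` on the first factor. -/
def alphaF (p q : ℕ) (i : Fin p) : OneForm p q := fun _ u => u.1.1 i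
/-- `β = dy` on the first factor. -/
def betaF (p q : ℕ) : OneForm p q := fun _ u => u.1.2.1
/-- `γ_i = dz_i − x_i dy` on the first factor. -/
def gammaF (p q : ℕ) (i : Fin p) : OneForm p q := fun m u =>
  u.1.2.2 i - m.1.1 i * u.1.2.1
/-- `α̃_i` on the second factor. -/
def alphaTF (p q : ℕ) (i : Fin q) : OneForm p q := fun _ u => u.2.1 i
/-- `β̃` on the second factor. -/
def betaTF (p q : ℕ) : OneForm p q := fun _ u => u.2.2.1
/-- `γ̃_i` on the second factor. -/
def gammaTF (p q : ℕ) (i : Fin q) : OneForm p q := fun m u =>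
  u.2.2.2 i - m.2.1 i * u.2.2.1

/-- The `2`-form `ω = Σ α_i ∧ γ_i + Σ α̃_i ∧ γ̃_i + β ∧ β̃` on `G(p,q)`. -/
def omegaF (p q : ℕ) : TwoForm p q := fun m u v =>
  (∑ i, wedge (alphaF p q i) (gammaF p q i) m u v) +
    (∑ i, wedge (alphaTF p q i) (gammaTF p q i) m u v) +
    wedge (betaF p q) (betaTF p q) m u v

namespace OmegaAux

open ContinuousLinearMap

/-- Pairing with a fixed vector, as a continuous linear map. -/
def pairCLM {n : ℕ} (a : Fin n → ℝ) : (Fin n → ℝ) →L[ℝ] ℝ :=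
  ∑ i, a i • ContinuousLinearMap.proj i

lemma pairCLM_apply {n : ℕ} (a x : Fin n → ℝ) : pairCLM a x = ∑ i, a i * x i := by
  simp [pairCLM, smul_eq_mul]

/-- The differential of left translation by an element with `x`-part `a` on `H(1,n)`. -/
def Lmap {n : ℕ} (a : Fin n → ℝ) : HSp n →L[ℝ] HSp n :=
  (fst ℝ (Fin n → ℝ) (ℝ × (Fin n → ℝ))).prod
    ((((fst ℝ ℝ (Fin n → ℝ))).comp (snd ℝ (Fin n → ℝ) (ℝ × (Fin n → ℝ)))).prod
      (((snd ℝ ℝ (Fin n → ℝ)).comp (snd ℝ (Fin n → ℝ) (ℝ × (Fin n → ℝ)))) +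
        (((fst ℝ ℝ (Fin n → ℝ)).comp (snd ℝ (Fin n → ℝ) (ℝ × (Fin n → ℝ)))).smulRight a)))

lemma Lmap_apply {n : ℕ} (a : Fin n → ℝ) (u : HSp n) :
    Lmap a u = (u.1, u.2.1, u.2.2 + u.2.1 • a) := by
  simp [Lmap]

/-- The differential of left translation on `G(p,q)`. -/
def LG {p q : ℕ} (g : GSp p q) : GSp p q →L[ℝ] GSp p q :=
  (Lmap g.1.1).prodMap (Lmap g.2.1)

lemma LG_apply {p q : ℕ} (g u : GSp p q) :
    LG g u = ((u.1.1, u.1.2.1, u.1.2.2 + u.1.2.1 • g.1.1),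
              (u.2.1, u.2.2.1, u.2.2.2 + u.2.2.1 • g.2.1)) := by
  simp [LG, Prod.map, Lmap_apply]

lemma Gmul_eq_affine (p q : ℕ) (g : GSp p q) :
    Gmul p q g = fun x => g + LG g x := by
  funext x
  simp [Gmul, Hmul, LG_apply, Prod.ext_iff, add_assoc]

lemma fderiv_Gmul (p q : ℕ) (g m : GSp p q) :
    fderiv ℝ (Gmul p q g) m = LG g := by
  rw [Gmul_eq_affine]
  exact ((LG g).hasFDerivAt.const_add g).fderiv

/-- The linear part of `x ↦ ω x v w`. -/
def Dmap (p q : ℕ) (v w : GSp p q) : GSp p q →L[ℝ] ℝ :=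
  (pairCLM fun i => w.1.1 i * v.1.2.1 - v.1.1 i * w.1.2.1).comp
    ((fst ℝ (Fin p → ℝ) (ℝ × (Fin p → ℝ))).comp (fst ℝ (HSp p) (HSp q))) +
  (pairCLM fun i => w.2.1 i * v.2.2.1 - v.2.1 i * w.2.2.1).comp
    ((fst ℝ (Fin q → ℝ) (ℝ × (Fin q → ℝ))).comp (snd ℝ (HSp p) (HSp q)))

lemma Dmap_apply (p q : ℕ) (v w u : GSp p q) :
    Dmap p q v w u =
      (∑ i, (w.1.1 i * v.1.2.1 - v.1.1 i * w.1.2.1) * u.1.1 i) +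
        ∑ i, (w.2.1 i * v.2.2.1 - v.2.1 i * w.2.2.1) * u.2.1 i := by
  simp [Dmap, pairCLM_apply]

lemma omega_affine (p q : ℕ) (v w : GSp p q) :
    (fun x : GSp p q => omegaF p q x v w) =
      fun x => omegaF p q 0 v w + Dmap p q v w x := by
  funext x
  simp only [omegaF, wedge, alphaF, gammaF, alphaTF, gammaTF, betaF, betaTF,
    Dmap_apply, Prod.fst_zero, Prod.snd_zero, Pi.zero_apply, zero_mul, mul_zero, sub_zero]
  rw [show (∑ i, (v.1.1 i * (w.1.2.2 i - x.1.1 i * w.1.2.1) -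
        w.1.1 i * (v.1.2.2 i - x.1.1 i * v.1.2.1))) =
      (∑ i, (v.1.1 i * w.1.2.2 i - w.1.1 i * v.1.2.2 i)) +
        ∑ i, (w.1.1 i * v.1.2.1 - v.1.1 i * w.1.2.1) * x.1.1 i from by
    rw [← Finset.sum_add_distrib]; exact Finset.sum_congr rfl fun i _ => by ring]
  rw [show (∑ i, (v.2.1 i * (w.2.2.2 i - x.2.1 i * w.2.2.1) -
        w.2.1 i * (v.2.2.2 i - x.2.1 i * v.2.2.1))) =
      (∑ i, (v.2.1 i * w.2.2.2 i - w.2.1 i * v.2.2.2 i)) +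
        ∑ i, (w.2.1 i * v.2.2.1 - v.2.1 i * w.2.2.1) * x.2.1 i from by
    rw [← Finset.sum_add_distrib]; exact Finset.sum_congr rfl fun i _ => by ring]
  ring

lemma fderiv_omega (p q : ℕ) (v w m : GSp p q) :
    fderiv ℝ (fun x => omegaF p q x v w) m = Dmap p q v w := by
  rw [omega_affine]
  exact ((Dmap p q v w).hasFDerivAt.const_add _).fderiv

end OmegaAux

open OmegaAux in
/-- On the `(2p+2q+2)`-dimensional Lie group `G(p,q) = H(1,p;ℝ) × H(1,q;ℝ)`, the
left-invariant `2`-form `ω = Σ α_i ∧ γ_i + Σ α̃_i ∧ γ̃_i + β ∧ β̃` is closed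
and nondegenerate; hence it is a symplectic form on `G(p,q)`. -/
theorem omega_symplectic_on_Gpq (p q : ℕ) :
    LeftInvariant2 (omegaF p q) ∧
    (∀ m u v w, extd2 (omegaF p q) m u v w = 0) ∧
    (∀ m u, (∀ v, omegaF p q m u v = 0) → u = 0) := by
  refine ⟨?_, ?_, ?_⟩
  · -- left invariance
    intro g m u v
    rw [fderiv_Gmul]
    have ha : ∀ (i : Fin p) w, alphaF p q i (Gmul p q g m) (LG g w) = alphaF p q i m w := by
      intro i w; simp [alphaF, LG_apply]
    have hg : ∀ (i : Fin p) w, gammaF p q i (Gmul p q g m) (LG g w) = gammaF p q i m w := by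
      intro i w
      simp only [gammaF, LG_apply, Gmul, Hmul, Pi.add_apply, Pi.smul_apply, smul_eq_mul]
      ring
    have hat : ∀ (i : Fin q) w, alphaTF p q i (Gmul p q g m) (LG g w) = alphaTF p q i m w := by
      intro i w; simp [alphaTF, LG_apply]
    have hgt : ∀ (i : Fin q) w, gammaTF p q i (Gmul p q g m) (LG g w) = gammaTF p q i m w := by
      intro i w
      simp only [gammaTF, LG_apply, Gmul, Hmul, Pi.add_apply, Pi.smul_apply, smul_eq_mul]
      ring
    have hb : ∀ w, betaF p q (Gmul p q g m) (LG g w) = betaF p q m w := by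
      intro w; simp [betaF, LG_apply]
    have hbt : ∀ w, betaTF p q (Gmul p q g m) (LG g w) = betaTF p q m w := by
      intro w; simp [betaTF, LG_apply]
    simp only [omegaF, wedge, ha, hg, hat, hgt, hb, hbt]
  · -- closedness
    intro m u v w
    unfold extd2
    rw [fderiv_omega, fderiv_omega, fderiv_omega, Dmap_apply, Dmap_apply, Dmap_apply]
    rw [show ∀ a1 b1 a2 b2 a3 b3 : ℝ, (a1 + b1) - (a2 + b2) + (a3 + b3)
        = (a1 - a2 + a3) + (b1 - b2 + b3) from fun _ _ _ _ _ _ => by ring]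
    rw [← Finset.sum_sub_distrib, ← Finset.sum_add_distrib,
      ← Finset.sum_sub_distrib, ← Finset.sum_add_distrib]
    rw [Finset.sum_congr rfl (fun (i : Fin p) _ => show
      ((w.1.1 i * v.1.2.1 - v.1.1 i * w.1.2.1) * u.1.1 i -
        (w.1.1 i * u.1.2.1 - u.1.1 i * w.1.2.1) * v.1.1 i +
        (v.1.1 i * u.1.2.1 - u.1.1 i * v.1.2.1) * w.1.1 i) = 0 from by ring)]
    rw [Finset.sum_congr rfl (fun (i : Fin q) _ => show
      ((w.2.1 i * v.2.2.1 - v.2.1 i * w.2.2.1) * u.2.1 i -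
        (w.2.1 i * u.2.2.1 - u.2.1 i * w.2.2.1) * v.2.1 i +
        (v.2.1 i * u.2.2.1 - u.2.1 i * v.2.2.1) * w.2.1 i) = 0 from by ring)]
    simp
  · -- nondegeneracy
    intro m u h
    have hA : ∀ j : Fin p, u.1.1 j = 0 := by
      intro j
      have := h ((0, 0, Pi.single j 1), 0)
      simpa [omegaF, wedge, alphaF, gammaF, alphaTF, gammaTF, betaF, betaTF,
        Pi.single_apply, Finset.sum_ite_eq', mul_ite] using this
    have hAT : ∀ j : Fin q, u.2.1 j = 0 := by
      intro j
      have := h (0, (0, 0, Pi.single j 1))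
      simpa [omegaF, wedge, alphaF, gammaF, alphaTF, gammaTF, betaF, betaTF,
        Pi.single_apply, Finset.sum_ite_eq', mul_ite] using this
    have hB : u.1.2.1 = 0 := by
      have := h (0, (0, 1, 0))
      simpa [omegaF, wedge, alphaF, gammaF, alphaTF, gammaTF, betaF, betaTF, hAT]
        using this
    have hBT : u.2.2.1 = 0 := by
      have := h ((0, 1, 0), 0)
      simpa [omegaF, wedge, alphaF, gammaF, alphaTF, gammaTF, betaF, betaTF, hA]
        using this
    have hC : ∀ j : Fin p, u.1.2.2 j = 0 := by
      intro j
      have := h ((Pi.single j 1, 0, 0), 0)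
      simpa [omegaF, wedge, alphaF, gammaF, alphaTF, gammaTF, betaF, betaTF,
        Pi.single_apply, Finset.sum_ite_eq', mul_ite, hB] using this
    have hCT : ∀ j : Fin q, u.2.2.2 j = 0 := by
      intro j
      have := h (0, (Pi.single j 1, 0, 0))
      simpa [omegaF, wedge, alphaF, gammaF, alphaTF, gammaTF, betaF, betaTF,
        Pi.single_apply, Finset.sum_ite_eq', mul_ite, hBT] using this
    refine Prod.ext (Prod.ext ?_ (Prod.ext ?_ ?_)) (Prod.ext ?_ (Prod.ext ?_ ?_))
    · exact funext hA
    · exact hB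
    · exact funext hC
    · exact funext hAT
    · exact hBT
    · exact funext hCT
end
end

section
/- In the minimal Sullivan algebra M = ⋀(a_1,…,a_p, b, c_1,…,c_p, ã_1,…,ã_q, b̃, c̃_1,…,c̃_q) with all generators of degree 1, da_i = db = dã_i = db̃ = 0, dc_i = −a_i b, dc̃_i = −ã_i b̃, the triple Massey product ⟨[b],[a_1],[a_1]⟩ is defined and does not vanish; consequently this minimal DGA is not formal. -/
noncomputable section

/-- Formality data: a DGA morphism to a graded algebra with zero differential
inducing an isomorphism on cohomology. -/
structure FormalityWitness {A : Type*} [Ring A] [Algebra ℝ A]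
    (𝒜 : ℕ → Submodule ℝ A) (d : A →ₗ[ℝ] A) where
  B : Type
  [ringB : Ring B]
  [algB : Algebra ℝ B]
  ℬ : ℕ → Submodule ℝ B
  hB : DGAAxioms ℬ (0 : B →ₗ[ℝ] B)
  ψ : A →ₐ[ℝ] B
  grade : ∀ {i : ℕ} {a : A}, a ∈ 𝒜 i → ψ a ∈ ℬ i
  chain : ∀ a : A, ψ (d a) = 0
  injOnCoh : ∀ (i : ℕ) (a : A), a ∈ 𝒜 i → d a = 0 → ψ a = 0 →
    ∃ x ∈ 𝒜 (i - 1), d x = a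
  surjOnCoh : ∀ (i : ℕ), ∀ b ∈ ℬ i, ∃ a ∈ 𝒜 i, d a = 0 ∧ ψ a = b

/-- The degree-`1` generators of the minimal model of `M(p,q)`:
`a_1, …, a_p, b, c_1, …, c_p` from `H(1,p)` and
`ã_1, …, ã_q, b̃, c̃_1, …, c̃_q` from `H(1,q)`. -/
abbrev GenIx (p q : ℕ) := (Fin p ⊕ Unit ⊕ Fin p) ⊕ (Fin q ⊕ Unit ⊕ Fin q)

/-- The free graded-commutative algebra `⋀ V` on the degree-`1` vector space
`V` spanned by the generators: since all generators have degree one, this is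
the exterior algebra of `V`. -/
abbrev MpqAlg (p q : ℕ) := ExteriorAlgebra ℝ (GenIx p q → ℝ)

/-- The grading of `⋀ V` by word length in the generators. -/
def MpqGrading (p q : ℕ) (i : ℕ) : Submodule ℝ (MpqAlg p q) :=
  LinearMap.range (ExteriorAlgebra.ι ℝ (M := GenIx p q → ℝ)) ^ i

/-- The generator `a_i`. -/
def genA (p q : ℕ) (i : Fin p) : MpqAlg p q :=
  ExteriorAlgebra.ι ℝ (Pi.single (Sum.inl (Sum.inl i)) 1)
/-- The generator `b`. -/
def genB (p q : ℕ) : MpqAlg p q :=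
  ExteriorAlgebra.ι ℝ (Pi.single (Sum.inl (Sum.inr (Sum.inl ()))) 1)
/-- The generator `c_i`. -/
def genC (p q : ℕ) (i : Fin p) : MpqAlg p q :=
  ExteriorAlgebra.ι ℝ (Pi.single (Sum.inl (Sum.inr (Sum.inr i))) 1)
/-- The generator `ã_i`. -/
def genAt (p q : ℕ) (i : Fin q) : MpqAlg p q :=
  ExteriorAlgebra.ι ℝ (Pi.single (Sum.inr (Sum.inl i)) 1)
/-- The generator `b̃`. -/
def genBt (p q : ℕ) : MpqAlg p q :=
  ExteriorAlgebra.ι ℝ (Pi.single (Sum.inr (Sum.inr (Sum.inl ()))) 1)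
/-- The generator `c̃_i`. -/
def genCt (p q : ℕ) (i : Fin q) : MpqAlg p q :=
  ExteriorAlgebra.ι ℝ (Pi.single (Sum.inr (Sum.inr (Sum.inr i))) 1)

open ExteriorAlgebra in
/-- Family of alternating maps extracting the `e_k ∧ e_l` coefficient in degree 2. -/
def masseyCoefFam {κ : Type*} [DecidableEq κ] (k l : κ) :
    ∀ n, (κ → ℝ) [⋀^Fin n]→ₗ[ℝ] ℝ
  | 2 => Matrix.detRowAlternating.compLinearMap
      (LinearMap.pi fun j : Fin 2 => LinearMap.proj (![k, l] j))
  | _ => 0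

open ExteriorAlgebra in
/-- Linear functional on the exterior algebra extracting the coefficient of
`e_k ∧ e_l` on degree-2 elements. -/
def masseyCoef {κ : Type*} [DecidableEq κ] (k l : κ) :
    ExteriorAlgebra ℝ (κ → ℝ) →ₗ[ℝ] ℝ :=
  ExteriorAlgebra.liftAlternating (masseyCoefFam k l)

open ExteriorAlgebra in
lemma masseyCoef_ι_mul_ι {κ : Type*} [DecidableEq κ] (k l : κ) (u v : κ → ℝ) :
    masseyCoef k l (ι ℝ u * ι ℝ v) = u k * v l - u l * v k := by
  have hdet : ∀ M : Matrix (Fin 2) (Fin 2) ℝ,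
      Matrix.detRowAlternating M = M 0 0 * M 1 1 - M 0 1 * M 1 0 := fun M =>
    Matrix.det_fin_two M
  rw [masseyCoef, liftAlternating_ι_mul, liftAlternating_ι]
  show (masseyCoefFam k l 2).curryLeft u ![v] = _
  rw [AlternatingMap.curryLeft_apply_apply]
  simp only [masseyCoefFam, AlternatingMap.compLinearMap_apply]
  refine (hdet _).trans ?_
  simp [Matrix.vecHead, Matrix.vecTail]

open ExteriorAlgebra in
lemma masseyCoef_single {κ : Type*} [DecidableEq κ] (k l m n : κ) :
    masseyCoef k l (ι ℝ (Pi.single m 1) * ι ℝ (Pi.single n 1)) =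
      (if k = m then (1:ℝ) else 0) * (if l = n then 1 else 0) -
      (if l = m then (1:ℝ) else 0) * (if k = n then 1 else 0) := by
  rw [masseyCoef_ι_mul_ι]
  simp [Pi.single_apply]

open ExteriorAlgebra in
/-- The differential of a degree-one element, determined by linearity. -/
lemma massey_d_formula (p q : ℕ)
    (d : MpqAlg p q →ₗ[ℝ] MpqAlg p q)
    (hda : ∀ i, d (genA p q i) = 0) (hdb : d (genB p q) = 0)
    (hdat : ∀ i, d (genAt p q i) = 0) (hdbt : d (genBt p q) = 0)
    (hdc : ∀ i, d (genC p q i) = -(genA p q i * genB p q))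
    (hdct : ∀ i, d (genCt p q i) = -(genAt p q i * genBt p q))
    (w : GenIx p q → ℝ) :
    d (ι ℝ w) =
      (∑ i : Fin p, w (Sum.inl (Sum.inr (Sum.inr i))) • -(genA p q i * genB p q)) +
      (∑ i : Fin q, w (Sum.inr (Sum.inr (Sum.inr i))) • -(genAt p q i * genBt p q)) := by
  classical
  have hw : (∑ k : GenIx p q, w k • (Pi.single k 1 : GenIx p q → ℝ)) = w := by
    ext j
    simp [Pi.single_apply]
  conv_lhs => rw [← hw]
  simp only [map_sum, map_smul]
  simp only [Fintype.sum_sum_type]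
  have hda' : ∀ i : Fin p, d (ExteriorAlgebra.ι ℝ (Pi.single (Sum.inl (Sum.inl i) : GenIx p q) 1)) = 0 := hda
  have hdb' : d (ExteriorAlgebra.ι ℝ (Pi.single (Sum.inl (Sum.inr (Sum.inl ())) : GenIx p q) 1)) = 0 := hdb
  have hdat' : ∀ i : Fin q, d (ExteriorAlgebra.ι ℝ (Pi.single (Sum.inr (Sum.inl i) : GenIx p q) 1)) = 0 := hdat
  have hdbt' : d (ExteriorAlgebra.ι ℝ (Pi.single (Sum.inr (Sum.inr (Sum.inl ())) : GenIx p q) 1)) = 0 := hdbt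
  have hdc' : ∀ i : Fin p, d (ExteriorAlgebra.ι ℝ (Pi.single (Sum.inl (Sum.inr (Sum.inr i)) : GenIx p q) 1)) = -(genA p q i * genB p q) := hdc
  have hdct' : ∀ i : Fin q, d (ExteriorAlgebra.ι ℝ (Pi.single (Sum.inr (Sum.inr (Sum.inr i)) : GenIx p q) 1)) = -(genAt p q i * genBt p q) := hdct
  simp only [hda', hdb', hdat', hdbt', hdc', hdct', smul_zero, Finset.sum_const_zero, zero_add, add_zero]

set_option maxHeartbeats 1600000 in
open ExteriorAlgebra in
/-- In the minimal Sullivan algebra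
`⋀(a_1,…,a_p, b, c_1,…,c_p, ã_1,…,ã_q, b̃, c̃_1,…,c̃_q)` (all generators of
degree `1`, `d a_i = d b = d ã_i = d b̃ = 0`, `d c_i = −a_i b`,
`d c̃_i = −ã_i b̃`), the triple Massey product `⟨[b],[a_1],[a_1]⟩` is defined
(`b·a_1` and `a_1·a_1` are exact) and does not vanish; consequently this
minimal DGA is not formal. -/
theorem Mpq_massey_nonvanishing_and_nonformal (p q : ℕ) (hp : 0 < p) (hq : 0 < q)
    (d : MpqAlg p q →ₗ[ℝ] MpqAlg p q)
    (hDGA : DGAAxioms (MpqGrading p q) d)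
    (hda : ∀ i, d (genA p q i) = 0) (hdb : d (genB p q) = 0)
    (hdat : ∀ i, d (genAt p q i) = 0) (hdbt : d (genBt p q) = 0)
    (hdc : ∀ i, d (genC p q i) = -(genA p q i * genB p q))
    (hdct : ∀ i, d (genCt p q i) = -(genAt p q i * genBt p q)) :
    (∃ ξ ∈ MpqGrading p q 1, d ξ = genB p q * genA p q ⟨0, hp⟩) ∧
    genA p q ⟨0, hp⟩ * genA p q ⟨0, hp⟩ = 0 ∧
    (∀ ξ₁₂ ∈ MpqGrading p q 1, d ξ₁₂ = genB p q * genA p q ⟨0, hp⟩ →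
      ∀ ξ₂₃ ∈ MpqGrading p q 1, d ξ₂₃ = genA p q ⟨0, hp⟩ * genA p q ⟨0, hp⟩ →
      ¬ (∃ x ∈ MpqGrading p q 1, d x = 0 ∧
          ∃ y ∈ MpqGrading p q 1, d y = 0 ∧
          ∃ η ∈ MpqGrading p q 1,
            genB p q * ξ₂₃ + ((-1 : ℝ) ^ (1 + 1)) • (ξ₁₂ * genA p q ⟨0, hp⟩) =
              genB p q * x + y * genA p q ⟨0, hp⟩ + d η)) ∧
    ¬ Nonempty (FormalityWitness (MpqGrading p q) d) := by
  classical
  -- index abbreviations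
  have hd := massey_d_formula p q d hda hdb hdat hdbt hdc hdct
  have swap : ∀ u v : GenIx p q → ℝ,
      (ι ℝ u : MpqAlg p q) * ι ℝ v = -(ι ℝ v * ι ℝ u) := fun u v =>
    eq_neg_of_add_eq_zero_left (ι_add_mul_swap u v)
  have hba : genB p q * genA p q ⟨0, hp⟩ = -(genA p q ⟨0, hp⟩ * genB p q) := swap _ _
  have haa : genA p q ⟨0, hp⟩ * genA p q ⟨0, hp⟩ = 0 := ι_sq_zero _
  have hmem1 : ∀ z : MpqAlg p q, z ∈ MpqGrading p q 1 ↔ ∃ w, ι ℝ w = z := by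
    intro z
    rw [MpqGrading, pow_one]
    exact Iff.rfl
  -- the two coefficient functionals
  -- χ extracts the coefficient of a₁ ∧ b ; φ extracts the coefficient of c₁ ∧ a₁
  set iA0 : GenIx p q := Sum.inl (Sum.inl ⟨0, hp⟩) with hiA0
  set iB : GenIx p q := Sum.inl (Sum.inr (Sum.inl ())) with hiB
  set iC0 : GenIx p q := Sum.inl (Sum.inr (Sum.inr ⟨0, hp⟩)) with hiC0
  have hχd : ∀ w : GenIx p q → ℝ, masseyCoef iA0 iB (d (ι ℝ w)) = -(w iC0) := by
    intro w
    rw [hd w, map_add, map_sum, map_sum]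
    simp only [map_smul, map_neg, genA, genB, genAt, genBt, masseyCoef_single,
      hiA0, hiB, hiC0]
    simp [Pi.single_apply, Finset.sum_ite_eq]
  have hφd : ∀ w : GenIx p q → ℝ, masseyCoef iC0 iA0 (d (ι ℝ w)) = 0 := by
    intro w
    rw [hd w, map_add, map_sum, map_sum]
    simp only [map_smul, map_neg, genA, genB, genAt, genBt, masseyCoef_single,
      hiA0, hiB, hiC0]
    simp [Pi.single_apply]
  have key : ∀ ξ₁₂ ∈ MpqGrading p q 1, d ξ₁₂ = genB p q * genA p q ⟨0, hp⟩ →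
      ∀ ξ₂₃ ∈ MpqGrading p q 1, d ξ₂₃ = genA p q ⟨0, hp⟩ * genA p q ⟨0, hp⟩ →
      ¬ (∃ x ∈ MpqGrading p q 1, d x = 0 ∧
          ∃ y ∈ MpqGrading p q 1, d y = 0 ∧
          ∃ η ∈ MpqGrading p q 1,
            genB p q * ξ₂₃ + ((-1 : ℝ) ^ (1 + 1)) • (ξ₁₂ * genA p q ⟨0, hp⟩) =
              genB p q * x + y * genA p q ⟨0, hp⟩ + d η) := by
    rintro ξ₁₂ h₁₂ hd₁₂ ξ₂₃ h₂₃ hd₂₃ ⟨x, hx, hdx, y, hy, hdy, η, hη, heq⟩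
    obtain ⟨u, rfl⟩ := (hmem1 _).1 h₁₂
    obtain ⟨v, rfl⟩ := (hmem1 _).1 h₂₃
    obtain ⟨wx, rfl⟩ := (hmem1 _).1 hx
    obtain ⟨wy, rfl⟩ := (hmem1 _).1 hy
    obtain ⟨wη, rfl⟩ := (hmem1 _).1 hη
    -- coefficient of c₁ in ξ₁₂ is 1
    have hu : u iC0 = 1 := by
      have h := congrArg (masseyCoef iA0 iB) hd₁₂
      rw [hχd] at h
      rw [show genB p q * genA p q ⟨0, hp⟩ =
        ι ℝ (Pi.single iB 1) * ι ℝ (Pi.single iA0 1) from rfl, masseyCoef_single] at h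
      simp [hiA0, hiB, hiC0] at h
      linarith
    -- coefficient of c₁ in y is 0
    have hwy : wy iC0 = 0 := by
      have h := congrArg (masseyCoef iA0 iB) hdy
      rw [hχd, map_zero] at h
      linarith
    -- apply φ to the Massey identity
    have h := congrArg (masseyCoef iC0 iA0) heq
    rw [show genA p q ⟨0, hp⟩ = ι ℝ (Pi.single iA0 1) from rfl,
      show genB p q = ι ℝ (Pi.single iB 1) from rfl] at h
    rw [map_add, map_add, map_add, map_smul, masseyCoef_ι_mul_ι, masseyCoef_ι_mul_ι,
      masseyCoef_ι_mul_ι, masseyCoef_ι_mul_ι, hφd] at h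
    simp [Pi.single_apply, hu, hwy, hiA0, hiB, hiC0] at h
    rw [← hiC0, hu, hwy] at h
    norm_num at h
  refine ⟨⟨genC p q ⟨0, hp⟩, (hmem1 _).2 ⟨_, rfl⟩, by rw [hdc, hba]⟩, haa, key, ?_⟩
  rintro ⟨W⟩
  letI := W.ringB
  letI := W.algB
  -- derive vanishing of the Massey product from formality
  have hc1 : genC p q ⟨0, hp⟩ ∈ MpqGrading p q 1 := (hmem1 _).2 ⟨_, rfl⟩
  have ha1 : genA p q ⟨0, hp⟩ ∈ MpqGrading p q 1 := (hmem1 _).2 ⟨_, rfl⟩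
  obtain ⟨y, hy1, hdy, hψy⟩ := W.surjOnCoh 1 (W.ψ (genC p q ⟨0, hp⟩)) (W.grade hc1)
  -- the closed element c₁a₁ - ya₁ maps to 0 under ψ
  have hzmem : genC p q ⟨0, hp⟩ * genA p q ⟨0, hp⟩ - y * genA p q ⟨0, hp⟩ ∈
      MpqGrading p q 2 := by
    have h1 := hDGA.mul_mem hc1 ha1
    have h2 := hDGA.mul_mem hy1 ha1
    rw [show (1 + 1 : ℕ) = 2 from rfl] at h1 h2
    exact sub_mem h1 h2
  have haba : (genA p q ⟨0, hp⟩ * genB p q) * genA p q ⟨0, hp⟩ = 0 := by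
    rw [mul_assoc, show genB p q * genA p q ⟨0, hp⟩ = -(genA p q ⟨0, hp⟩ * genB p q)
      from swap _ _, mul_neg, ← mul_assoc, haa, zero_mul, neg_zero]
  have hdz : d (genC p q ⟨0, hp⟩ * genA p q ⟨0, hp⟩ - y * genA p q ⟨0, hp⟩) = 0 := by
    rw [map_sub, hDGA.leibniz hc1 _, hDGA.leibniz hy1 _, hda, hdy, hdc]
    simp [neg_mul, haba]
  have hψz : W.ψ (genC p q ⟨0, hp⟩ * genA p q ⟨0, hp⟩ - y * genA p q ⟨0, hp⟩) = 0 := by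
    rw [map_sub, map_mul, map_mul, hψy, sub_self]
  obtain ⟨η, hη1, hdη⟩ := W.injOnCoh 2 _ hzmem hdz hψz
  rw [show (2 - 1 : ℕ) = 1 from rfl] at hη1
  refine key (genC p q ⟨0, hp⟩) hc1 (by rw [hdc, hba]) 0 (zero_mem _) (by rw [map_zero, haa])
    ⟨0, zero_mem _, map_zero _, y, hy1, hdy, η, hη1, ?_⟩
  rw [hdη, mul_zero]
  norm_num
end
end

section
/- Let f : M_1 → M_2 be a homology s-equivalence between connected smooth manifolds (f* : H^i(M_2) → H^i(M_1) is an isomorphism for i ≤ s−1 and a monomorphism for i = s), and suppose classes a_1, a_2, a_3 ∈ H^1(M_2) have a defined and non-vanishing triple Massey product ⟨a_1,a_2,a_3⟩ with s ≥ 2. Then ⟨f*a_1, f*a_2, f*a_3⟩ is defined and does not vanish in H^2(M_1)/(f*a_1 · H^1(M_1) + H^1(M_1) · f*a_3), and hence M_1 is not formal. -/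
/-- A homology `s`-equivalence `f : M₁ → M₂` pulls back non-vanishing triple
Massey products of degree-one classes.  Here the de Rham complexes of `M₂` and
`M₁` are the DGAs `(A₂, d₂)` and `(A₁, d₁)`, and the pullback `f^*` is the DGA
morphism `φ : A₂ → A₁`; the hypothesis that `f` is a homology `s`-equivalence
says that `φ` induces an isomorphism on `H^i` for `i ≤ s−1` and a monomorphism
for `i = s`.  Given classes `a₁, a₂, a₃ ∈ H¹(M₂)` (with closed representatives
`α₁, α₂, α₃` and primitives `ξ₁₂, ξ₂₃`) whose Massey product is defined and
does not vanish, and `s ≥ 2`, the Massey product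
`⟨f^*a₁, f^*a₂, f^*a₃⟩` is defined and does not vanish in
`H²(M₁)/(f^*a₁·H¹(M₁) + H¹(M₁)·f^*a₃)`; hence `M₁` is not formal. -/
theorem homology_equivalence_pullback_massey_nonvanishing
    {A₁ A₂ : Type*} [Ring A₁] [Algebra ℝ A₁] [Ring A₂] [Algebra ℝ A₂]
    (𝒜₁ : ℕ → Submodule ℝ A₁) [DirectSum.Decomposition 𝒜₁]
    (𝒜₂ : ℕ → Submodule ℝ A₂) [DirectSum.Decomposition 𝒜₂]
    (d₁ : A₁ →ₗ[ℝ] A₁) (d₂ : A₂ →ₗ[ℝ] A₂)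
    (h₁ : DGAAxioms 𝒜₁ d₁) (h₂ : DGAAxioms 𝒜₂ d₂)
    (φ : A₂ →ₐ[ℝ] A₁)
    (hgrade : ∀ {i : ℕ} {a : A₂}, a ∈ 𝒜₂ i → φ a ∈ 𝒜₁ i)
    (hchain : ∀ a : A₂, φ (d₂ a) = d₁ (φ a))
    (s : ℕ) (hs : 2 ≤ s)
    -- `φ` is surjective on `H^i` for `i ≤ s − 1` …
    (hsurj : ∀ i ≤ s - 1, ∀ a ∈ 𝒜₁ i, d₁ a = 0 →
      ∃ b ∈ 𝒜₂ i, d₂ b = 0 ∧ ∃ η ∈ 𝒜₁ (i - 1), φ b - a = d₁ η)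
    -- … and injective on `H^i` for `i ≤ s`:
    (hinj : ∀ i ≤ s, ∀ b ∈ 𝒜₂ i, d₂ b = 0 →
      (∃ η ∈ 𝒜₁ (i - 1), φ b = d₁ η) → ∃ ζ ∈ 𝒜₂ (i - 1), b = d₂ ζ)
    (α₁ α₂ α₃ ξ₁₂ ξ₂₃ : A₂)
    (hα₁ : α₁ ∈ 𝒜₂ 1) (hα₂ : α₂ ∈ 𝒜₂ 1) (hα₃ : α₃ ∈ 𝒜₂ 1)
    (hdα₁ : d₂ α₁ = 0) (hdα₂ : d₂ α₂ = 0) (hdα₃ : d₂ α₃ = 0)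
    (hξ₁₂ : ξ₁₂ ∈ 𝒜₂ 1) (hξ₂₃ : ξ₂₃ ∈ 𝒜₂ 1)
    (hdξ₁₂ : d₂ ξ₁₂ = α₁ * α₂) (hdξ₂₃ : d₂ ξ₂₃ = α₂ * α₃)
    -- the Massey product `⟨a₁, a₂, a₃⟩` does not vanish on `M₂`:
    (hnv : ¬ (∃ x ∈ 𝒜₂ 1, d₂ x = 0 ∧ ∃ y ∈ 𝒜₂ 1, d₂ y = 0 ∧
      ∃ η ∈ 𝒜₂ 1, α₁ * ξ₂₃ + ξ₁₂ * α₃ = α₁ * x + y * α₃ + d₂ η)) :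
    (d₁ (φ ξ₁₂) = φ α₁ * φ α₂) ∧ (d₁ (φ ξ₂₃) = φ α₂ * φ α₃) ∧
    ¬ (∃ x ∈ 𝒜₁ 1, d₁ x = 0 ∧ ∃ y ∈ 𝒜₁ 1, d₁ y = 0 ∧
      ∃ η ∈ 𝒜₁ 1, φ α₁ * φ ξ₂₃ + φ ξ₁₂ * φ α₃ =
        φ α₁ * x + y * φ α₃ + d₁ η) ∧
    ¬ Nonempty (FormalityWitness 𝒜₁ d₁) := by

  -- abbreviations
  have dφ : ∀ a : A₂, d₂ a = 0 → d₁ (φ a) = 0 := by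
    intro a ha
    rw [← hchain, ha, map_zero]
  have dφα₁ : d₁ (φ α₁) = 0 := dφ _ hdα₁
  have dφα₂ : d₁ (φ α₂) = 0 := dφ _ hdα₂
  have dφα₃ : d₁ (φ α₃) = 0 := dφ _ hdα₃
  have h1 : d₁ (φ ξ₁₂) = φ α₁ * φ α₂ := by
    rw [← hchain, hdξ₁₂, map_mul]
  have h2 : d₁ (φ ξ₂₃) = φ α₂ * φ α₃ := by
    rw [← hchain, hdξ₂₃, map_mul]
  -- Leibniz in degree 1 and 0
  have lb1₁ : ∀ {a : A₁}, a ∈ 𝒜₁ 1 → ∀ b : A₁, d₁ (a * b) = d₁ a * b - a * d₁ b := by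
    intro a ha b
    rw [h₁.leibniz ha b]
    simp [sub_eq_add_neg]
  have lb0₁ : ∀ {a : A₁}, a ∈ 𝒜₁ 0 → ∀ b : A₁, d₁ (a * b) = d₁ a * b + a * d₁ b := by
    intro a ha b
    rw [h₁.leibniz ha b]
    simp
  have lb1₂ : ∀ {a : A₂}, a ∈ 𝒜₂ 1 → ∀ b : A₂, d₂ (a * b) = d₂ a * b - a * d₂ b := by
    intro a ha b
    rw [h₂.leibniz ha b]
    simp [sub_eq_add_neg]
  have hm : ¬ (∃ x ∈ 𝒜₁ 1, d₁ x = 0 ∧ ∃ y ∈ 𝒜₁ 1, d₁ y = 0 ∧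
      ∃ η ∈ 𝒜₁ 1, φ α₁ * φ ξ₂₃ + φ ξ₁₂ * φ α₃ =
        φ α₁ * x + y * φ α₃ + d₁ η) := by
    rintro ⟨x, hx, hdx, y, hy, hdy, η, hη, heq⟩
    obtain ⟨bx, hbx, hdbx, ηx, hηx, hφbx⟩ := hsurj 1 (by omega) x hx hdx
    obtain ⟨by', hby, hdby, ηy, hηy, hφby⟩ := hsurj 1 (by omega) y hy hdy
    set w : A₂ := α₁ * ξ₂₃ + ξ₁₂ * α₃ - (α₁ * bx + by' * α₃) with hw_def
    have hw : w ∈ 𝒜₂ 2 := by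
      have m1 := h₂.mul_mem hα₁ hξ₂₃
      have m2 := h₂.mul_mem hξ₁₂ hα₃
      have m3 := h₂.mul_mem hα₁ hbx
      have m4 := h₂.mul_mem hby hα₃
      exact sub_mem (add_mem m1 m2) (add_mem m3 m4)
    have hdw : d₂ w = 0 := by
      rw [hw_def]
      rw [map_sub, map_add, map_add, lb1₂ hα₁, lb1₂ hξ₁₂, lb1₂ hα₁, lb1₂ hby,
        hdα₁, hdα₃, hdξ₁₂, hdξ₂₃, hdbx, hdby]
      simp [mul_assoc]
    -- φ w is exact
    have key : φ w = d₁ (η + φ α₁ * ηx - ηy * φ α₃) := by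
      have e1 : φ α₁ * d₁ ηx = -d₁ (φ α₁ * ηx) := by
        rw [lb1₁ (hgrade hα₁), dφα₁]
        simp
      have e2 : d₁ ηy * φ α₃ = d₁ (ηy * φ α₃) := by
        rw [lb0₁ hηy, dφα₃, mul_zero, add_zero]
      have hx' : x = φ bx - d₁ ηx := by rw [← hφbx]; abel
      have hy' : y = φ by' - d₁ ηy := by rw [← hφby]; abel
      have : φ (α₁ * ξ₂₃ + ξ₁₂ * α₃) =
          φ (α₁ * bx + by' * α₃) + d₁ (η + φ α₁ * ηx - ηy * φ α₃) := by
        rw [map_add, map_mul, map_mul, heq, hx', hy', map_add, map_mul, map_mul,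
          map_sub, map_add, mul_sub, sub_mul, e1, e2]
        abel
      rw [hw_def, map_sub, this]
      abel
    have hη' : η + φ α₁ * ηx - ηy * φ α₃ ∈ 𝒜₁ 1 := by
      have m1 : φ α₁ * ηx ∈ 𝒜₁ 1 := by simpa using h₁.mul_mem (hgrade hα₁) hηx
      have m2 : ηy * φ α₃ ∈ 𝒜₁ 1 := by simpa using h₁.mul_mem hηy (hgrade hα₃)
      exact sub_mem (add_mem hη m1) m2
    obtain ⟨ζ, hζ, hwζ⟩ := hinj 2 hs w hw hdw ⟨_, hη', key⟩
    exact hnv ⟨bx, hbx, hdbx, by', hby, hdby, ζ, hζ, by rw [← hwζ, hw_def]; abel⟩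
  refine ⟨h1, h2, hm, ?_⟩
  rintro ⟨W⟩
  letI : Ring W.B := W.ringB
  letI : Algebra ℝ W.B := W.algB
  obtain ⟨c₂₃, hc₂₃, hdc₂₃, hψc₂₃⟩ := W.surjOnCoh 1 (W.ψ (φ ξ₂₃)) (W.grade (hgrade hξ₂₃))
  obtain ⟨c₁₂, hc₁₂, hdc₁₂, hψc₁₂⟩ := W.surjOnCoh 1 (W.ψ (φ ξ₁₂)) (W.grade (hgrade hξ₁₂))
  set u : A₁ := φ α₁ * φ ξ₂₃ + φ ξ₁₂ * φ α₃ - (φ α₁ * c₂₃ + c₁₂ * φ α₃) with hu_def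
  have hu : u ∈ 𝒜₁ 2 := by
    have m1 := h₁.mul_mem (hgrade hα₁) (hgrade hξ₂₃)
    have m2 := h₁.mul_mem (hgrade hξ₁₂) (hgrade hα₃)
    have m3 := h₁.mul_mem (hgrade hα₁) hc₂₃
    have m4 := h₁.mul_mem hc₁₂ (hgrade hα₃)
    exact sub_mem (add_mem m1 m2) (add_mem m3 m4)
  have hdu : d₁ u = 0 := by
    rw [hu_def, map_sub, map_add, map_add, lb1₁ (hgrade hα₁), lb1₁ (hgrade hξ₁₂),
      lb1₁ (hgrade hα₁), lb1₁ hc₁₂, h1, h2, dφα₁, dφα₃, hdc₂₃, hdc₁₂]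
    simp [mul_assoc]
  have hψu : W.ψ u = 0 := by
    rw [hu_def, map_sub, map_add, map_add, map_mul, map_mul, map_mul, map_mul,
      hψc₂₃, hψc₁₂]
    abel
  obtain ⟨η, hη, hdη⟩ := W.injOnCoh 2 u hu hdu hψu
  exact hm ⟨c₂₃, hc₂₃, hdc₂₃, c₁₂, hc₁₂, hdc₁₂, η, hη, by rw [hdη, hu_def]; abel⟩
end

section
/- Let (M,ω) be a 2n-dimensional compact symplectic manifold and j : Z ↪ M a symplectic submanifold of dimension 2n−2 whose Poincaré dual satisfies PD[Z] = k[ω] for some positive integer k, such that j* : H^i(M) → H^i(Z) is an isomorphism for i ≤ n−2. Then for each p = 2(n−1) − i with 0 ≤ i ≤ n−2, the map j* induces an injection H^p(M)/ker([ω]∪ : H^p(M) → H^{p+2}(M)) → H^p(Z). -/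
/-- Axioms of a graded-commutative algebra over `ℝ` (here: the de Rham
cohomology ring of a compact oriented manifold). -/
structure GradedCommAxioms {A : Type*} [Ring A] [Algebra ℝ A]
    (𝒜 : ℕ → Submodule ℝ A) : Prop where
  one_mem : (1 : A) ∈ 𝒜 0
  mul_mem : ∀ {i j : ℕ} {a b : A}, a ∈ 𝒜 i → b ∈ 𝒜 j → a * b ∈ 𝒜 (i + j)
  gcomm : ∀ {i j : ℕ} {a b : A}, a ∈ 𝒜 i → b ∈ 𝒜 j →
    a * b = ((-1 : ℝ) ^ (i * j)) • (b * a)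

/-- Donaldson submanifolds and the Lefschetz-type injection (Lemma on
Donaldson submanifolds):  let `A = H^*(M)` be the cohomology ring of a compact
symplectic `2n`-manifold `(M, ω)` and `B = H^*(Z)` that of a submanifold
`j : Z ↪ M` of dimension `2n−2`, with `j^*` the induced ring homomorphism.
Orientations are recorded by the integration functionals `IM` (evaluation
against the fundamental class of `M`, nondegenerate by Poincaré duality in
complementary degrees `p` and `2n−p`) and `IZ` (likewise for `Z`, in degrees
`p` and `2n−2−p`).  Assume `PD[Z] = k[ω]` with `k ∈ ℕ₊`, i.e.
`∫_Z j^*η = k ∫_M η ∧ ω` for all `η ∈ H^{2n−2}(M)`, and that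
`j^* : H^i(M) → H^i(Z)` is an isomorphism for `i ≤ n−2`.  Then for each
`p = 2(n−1) − i` with `0 ≤ i ≤ n−2`, the kernel of
`j^* : H^p(M) → H^p(Z)` is exactly `ker([ω] ∪ · : H^p(M) → H^{p+2}(M))`, so
`j^*` induces a monomorphism `H^p(M)/ker([ω]∪·) → H^p(Z)`. -/
theorem donaldson_submanifold_injection
    {A B : Type*} [Ring A] [Algebra ℝ A] [Ring B] [Algebra ℝ B]
    (𝒜 : ℕ → Submodule ℝ A) [DirectSum.Decomposition 𝒜]
    (ℬ : ℕ → Submodule ℝ B) [DirectSum.Decomposition ℬ]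
    (hA : GradedCommAxioms 𝒜) (hB : GradedCommAxioms ℬ)
    (n : ℕ) (hn : 2 ≤ n)
    (j : A →ₐ[ℝ] B) (hgrade : ∀ {i : ℕ} {a : A}, a ∈ 𝒜 i → j a ∈ ℬ i)
    (IM : A →ₗ[ℝ] ℝ) (IZ : B →ₗ[ℝ] ℝ)
    -- Poincaré duality on `M` (dimension `2n`) …
    (hPDM : ∀ p ≤ 2 * n, ∀ x ∈ 𝒜 p, x ≠ 0 → ∃ y ∈ 𝒜 (2 * n - p), IM (x * y) ≠ 0)
    -- … and on `Z` (dimension `2n − 2`):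
    (hPDZ : ∀ p ≤ 2 * n - 2, ∀ x ∈ ℬ p, x ≠ 0 →
      ∃ y ∈ ℬ (2 * n - 2 - p), IZ (x * y) ≠ 0)
    (ω : A) (hω : ω ∈ 𝒜 2)
    (k : ℕ) (hk : 0 < k)
    -- `PD[Z] = k[ω]`:
    (hPD : ∀ η ∈ 𝒜 (2 * n - 2), IZ (j η) = (k : ℝ) * IM (η * ω))
    -- `j^* : H^i(M) → H^i(Z)` is an isomorphism for `i ≤ n − 2`:
    (hsurj : ∀ i ≤ n - 2, ∀ b ∈ ℬ i, ∃ a ∈ 𝒜 i, j a = b)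
    (hinj : ∀ i ≤ n - 2, ∀ a ∈ 𝒜 i, j a = 0 → a = 0) :
    ∀ i ≤ n - 2, ∀ x ∈ 𝒜 (2 * (n - 1) - i), (j x = 0 ↔ ω * x = 0) := by

  intro i hi x hx
  have hsign : ∀ m : ℕ, ((-1 : ℝ)) ^ (m * 2) = 1 := fun m => by
    rw [pow_mul', neg_one_sq, one_pow]
  have hk' : (k : ℝ) ≠ 0 := Nat.cast_ne_zero.mpr hk.ne'
  constructor
  · intro hjx
    by_contra hωx
    have h1 : ω * x ∈ 𝒜 (2 + (2 * (n - 1) - i)) := hA.mul_mem hω hx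
    have he : 2 + (2 * (n - 1) - i) = 2 * n - i := by omega
    rw [he] at h1
    obtain ⟨y, hy, hIM⟩ := hPDM (2 * n - i) (by omega) _ h1 hωx
    have he2 : 2 * n - (2 * n - i) = i := by omega
    rw [he2] at hy
    have hxy : x * y ∈ 𝒜 (2 * (n - 1) - i + i) := hA.mul_mem hx hy
    have he3 : 2 * (n - 1) - i + i = 2 * n - 2 := by omega
    rw [he3] at hxy
    have hint := hPD _ hxy
    have hj0 : j (x * y) = 0 := by rw [map_mul, hjx, zero_mul]
    rw [hj0, map_zero] at hint
    have hIM0 : IM (x * y * ω) = 0 := by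
      rcases mul_eq_zero.mp hint.symm with h | h
      · exact absurd h hk'
      · exact h
    have hcomm := hA.gcomm hxy hω
    rw [hsign, one_smul] at hcomm
    apply hIM
    rw [mul_assoc, ← hcomm, hIM0]
  · intro hωx
    by_contra hjx
    obtain ⟨b, hb, hIZb⟩ := hPDZ (2 * (n - 1) - i) (by omega) _ (hgrade hx) hjx
    have he : 2 * n - 2 - (2 * (n - 1) - i) = i := by omega
    rw [he] at hb
    obtain ⟨a, ha, hja⟩ := hsurj i hi b hb
    have hxa : x * a ∈ 𝒜 (2 * (n - 1) - i + i) := hA.mul_mem hx ha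
    have he3 : 2 * (n - 1) - i + i = 2 * n - 2 := by omega
    rw [he3] at hxa
    have hint := hPD _ hxa
    have hcomm := hA.gcomm hxa hω
    rw [hsign, one_smul] at hcomm
    have h0 : x * a * ω = 0 := by
      rw [hcomm, ← mul_assoc, hωx, zero_mul]
    rw [h0, map_mul, hja, map_zero, mul_zero] at hint
    exact hIZb hint
end
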